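/- arXiv:2004.09926 — 10 statements merged into one kernel-verified Lean document; each statement's English description precedes it below -/
import Mathlib

section
/- Let M be a monoid, μ : FreeMonoid Σ →* M a monoid homomorphism, S ⊆ M, and R := {w : List Σ | μ w ∈ S}. For every set L ⊆ List (Σ ⊕ X) and every word substitution σ : X → Set (List Σ): (i) σ ≤ σ̂ (pointwise); (ii) if σ(L) ⊆ R then σ̂(L) ⊆ R; (iii) if σ(L) = R then σ̂(L) = R. Here σ̂ is the μ-saturation of σ. -/
/-- Extension of a word substitution to letters of the combined alphabet. -/
def substBar {α X : Type*} (σ : X → Set (List α)) : α ⊕ X → Set (List α)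
  | Sum.inl a => {[a]}
  | Sum.inr x => σ x

/-- Extension of a word substitution to words over the combined alphabet. -/
def substWord {α X : Type*} (σ : X → Set (List α)) : List (α ⊕ X) → Set (List α)
  | [] => {[]}
  | c :: w => {u | ∃ u₁ ∈ substBar σ c, ∃ u₂ ∈ substWord σ w, u = u₁ ++ u₂}

/-- Extension of a word substitution to languages over the combined alphabet. -/
def substLang {α X : Type*} (σ : X → Set (List α)) (L : Set (List (α ⊕ X))) :
    Set (List α) :=
  ⋃ w ∈ L, substWord σ w

/-- The `μ`-saturation of a word substitution. -/
def saturate {α X M : Type*} [Monoid M] (μ : FreeMonoid α →* M)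
    (σ : X → Set (List α)) : X → Set (List α) :=
  fun x => {v : List α | ∃ u ∈ σ x, μ (FreeMonoid.ofList u) = μ (FreeMonoid.ofList v)}

lemma substWord_saturate_key {α X M : Type*} [Monoid M] (μ : FreeMonoid α →* M)
    (σ : X → Set (List α)) : ∀ (w : List (α ⊕ X)) (v : List α),
    v ∈ substWord (saturate μ σ) w →
    ∃ u ∈ substWord σ w, μ (FreeMonoid.ofList u) = μ (FreeMonoid.ofList v) := by
  intro w
  induction w with
  | nil => intro v hv; exact ⟨v, hv, rfl⟩
  | cons c w ih =>
    rintro v ⟨u₁, h₁, u₂, h₂, rfl⟩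
    obtain ⟨t₂, ht₂, he₂⟩ := ih u₂ h₂
    have : ∃ t₁ ∈ substBar σ c,
        μ (FreeMonoid.ofList t₁) = μ (FreeMonoid.ofList u₁) := by
      cases c with
      | inl a => exact ⟨u₁, h₁, rfl⟩
      | inr x => exact h₁
    obtain ⟨t₁, ht₁, he₁⟩ := this
    refine ⟨t₁ ++ t₂, ⟨t₁, ht₁, t₂, ht₂, rfl⟩, ?_⟩
    have h : ∀ (a b : List α),
        μ (FreeMonoid.ofList (a ++ b)) = μ (FreeMonoid.ofList a) * μ (FreeMonoid.ofList b) := by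
      intro a b
      rw [← map_mul]
      rfl
    rw [h, h, he₁, he₂]

theorem saturation_preserves_solutions {α X M : Type*} [Monoid M]
    (μ : FreeMonoid α →* M) (S : Set M) (R : Set (List α))
    (hR : R = {w : List α | μ (FreeMonoid.ofList w) ∈ S})
    (L : Set (List (α ⊕ X))) (σ : X → Set (List α)) :
    σ ≤ saturate μ σ ∧
    (substLang σ L ⊆ R → substLang (saturate μ σ) L ⊆ R) ∧
    (substLang σ L = R → substLang (saturate μ σ) L = R) := by
  have hle : σ ≤ saturate μ σ := fun x v hv => ⟨v, hv, rfl⟩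
  have hsub : substLang σ L ⊆ substLang (saturate μ σ) L := by
    intro v hv
    simp only [substLang, Set.mem_iUnion] at hv ⊢
    obtain ⟨w, hw, hv⟩ := hv
    refine ⟨w, hw, ?_⟩
    clear hw
    induction w generalizing v with
    | nil => exact hv
    | cons c w ih =>
      obtain ⟨u₁, h₁, u₂, h₂, rfl⟩ := hv
      refine ⟨u₁, ?_, u₂, ih h₂, rfl⟩
      cases c with
      | inl a => exact h₁
      | inr x => exact hle x h₁
  have h2 : substLang σ L ⊆ R → substLang (saturate μ σ) L ⊆ R := by
    intro hL v hv
    simp only [substLang, Set.mem_iUnion] at hv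
    obtain ⟨w, hw, hv⟩ := hv
    obtain ⟨u, hu, he⟩ := substWord_saturate_key μ σ w v hv
    have : u ∈ R := hL (Set.mem_biUnion hw hu)
    rw [hR] at this ⊢
    simpa [← he] using this
  exact ⟨hle, h2, fun hL => le_antisymm (h2 hL.le) (hL ▸ hsub)⟩
end

section
/- Let M be a finite monoid, μ : FreeMonoid Σ →* M, S ⊆ M, R := {w : List Σ | μ w ∈ S}, X a Fintype, σ₁ ≤ σ₂ word substitutions, and L ⊆ List (Σ ⊕ X). Call σ a solution if σ₁ ≤ σ ≤ σ₂ and σ(L) ⊆ R. If σ is a solution, then there exists a solution σ' with σ ≤ σ' that is maximal among solutions: every solution τ with σ' ≤ τ satisfies τ = σ'. The same statement holds when 'solution' is defined with σ(L) = R in place of σ(L) ⊆ R. -/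
lemma substBar_mono {α X : Type*} {σ τ : X → Set (List α)} (h : σ ≤ τ) (c : α ⊕ X) :
    substBar σ c ⊆ substBar τ c := by
  cases c with
  | inl a => exact le_rfl
  | inr x => exact h x

lemma substWord_mono {α X : Type*} {σ τ : X → Set (List α)} (h : σ ≤ τ) :
    ∀ w : List (α ⊕ X), substWord σ w ⊆ substWord τ w
  | [] => le_rfl
  | c :: w => by
    rintro u ⟨u₁, h₁, u₂, h₂, rfl⟩
    exact ⟨u₁, substBar_mono h c h₁, u₂, substWord_mono h w h₂, rfl⟩

lemma substLang_mono {α X : Type*} {σ τ : X → Set (List α)} (h : σ ≤ τ)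
    (L : Set (List (α ⊕ X))) : substLang σ L ⊆ substLang τ L := by
  intro u hu
  rcases Set.mem_iUnion₂.1 hu with ⟨w, hw, huw⟩
  exact Set.mem_iUnion₂.2 ⟨w, hw, substWord_mono h w huw⟩

/-- An element of `substWord` of the union of a nonempty chain lies in `substWord`
of some member of the chain. -/
lemma substWord_chain {α X : Type*} {c : Set (X → Set (List α))}
    (hc : IsChain (· ≤ ·) c) {ρ : X → Set (List α)} (hρ : ρ ∈ c) :
    ∀ w : List (α ⊕ X), ∀ u ∈ substWord (fun x => ⋃ τ ∈ c, τ x) w,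
      ∃ τ ∈ c, u ∈ substWord τ w
  | [] => fun u hu => ⟨ρ, hρ, hu⟩
  | d :: w => by
    rintro u ⟨u₁, h₁, u₂, h₂, rfl⟩
    obtain ⟨τ₂, hτ₂c, hτ₂⟩ := substWord_chain hc hρ w u₂ h₂
    cases d with
    | inl a =>
        exact ⟨τ₂, hτ₂c, u₁, h₁, u₂, hτ₂, rfl⟩
    | inr x =>
        rcases Set.mem_iUnion₂.1 h₁ with ⟨τ₁, hτ₁c, hτ₁⟩
        rcases hc.total hτ₁c hτ₂c with h | h
        · exact ⟨τ₂, hτ₂c, u₁, h x hτ₁, u₂, hτ₂, rfl⟩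
        · exact ⟨τ₁, hτ₁c, u₁, hτ₁, u₂, substWord_mono h w hτ₂, rfl⟩

lemma chain_ub {α X : Type*} {σ₁ σ₂ : X → Set (List α)} {R : Set (List α)}
    {L : Set (List (α ⊕ X))}
    {c : Set (X → Set (List α))}
    (hcs : c ⊆ {τ | σ₁ ≤ τ ∧ τ ≤ σ₂ ∧ substLang τ L ⊆ R})
    (hc : IsChain (· ≤ ·) c) {ρ : X → Set (List α)} (hρ : ρ ∈ c) :
    ∃ ub ∈ {τ | σ₁ ≤ τ ∧ τ ≤ σ₂ ∧ substLang τ L ⊆ R}, ∀ z ∈ c, z ≤ ub := by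
  refine ⟨fun x => ⋃ τ ∈ c, τ x, ⟨?_, ?_, ?_⟩, ?_⟩
  · intro x v hv
    exact Set.mem_iUnion₂.2 ⟨ρ, hρ, (hcs hρ).1 x hv⟩
  · intro x v hv
    rcases Set.mem_iUnion₂.1 hv with ⟨τ, hτc, hτ⟩
    exact (hcs hτc).2.1 x hτ
  · intro u hu
    rcases Set.mem_iUnion₂.1 hu with ⟨w, hw, huw⟩
    obtain ⟨τ, hτc, hτ⟩ := substWord_chain hc hρ w u huw
    exact (hcs hτc).2.2 (Set.mem_iUnion₂.2 ⟨w, hw, hτ⟩)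
  · intro z hz x v hv
    exact Set.mem_iUnion₂.2 ⟨z, hz, hv⟩

theorem exists_maximal_solution {α X M : Type*} [Monoid M] [Fintype M] [Fintype X]
    (μ : FreeMonoid α →* M) (S : Set M) (R : Set (List α))
    (hR : R = {w : List α | μ (FreeMonoid.ofList w) ∈ S})
    (σ₁ σ₂ : X → Set (List α)) (h12 : σ₁ ≤ σ₂) (L : Set (List (α ⊕ X))) :
    (∀ σ : X → Set (List α), σ₁ ≤ σ → σ ≤ σ₂ → substLang σ L ⊆ R →
      ∃ σ' : X → Set (List α), σ₁ ≤ σ' ∧ σ' ≤ σ₂ ∧ substLang σ' L ⊆ R ∧ σ ≤ σ' ∧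
        ∀ τ : X → Set (List α), σ₁ ≤ τ → τ ≤ σ₂ → substLang τ L ⊆ R → σ' ≤ τ → τ = σ') ∧
    (∀ σ : X → Set (List α), σ₁ ≤ σ → σ ≤ σ₂ → substLang σ L = R →
      ∃ σ' : X → Set (List α), σ₁ ≤ σ' ∧ σ' ≤ σ₂ ∧ substLang σ' L = R ∧ σ ≤ σ' ∧
        ∀ τ : X → Set (List α), σ₁ ≤ τ → τ ≤ σ₂ → substLang τ L = R → σ' ≤ τ → τ = σ') := by
  constructor
  · intro σ h1 h2 hσ
    obtain ⟨m, hσm, hm⟩ := zorn_le_nonempty₀ {τ | σ₁ ≤ τ ∧ τ ≤ σ₂ ∧ substLang τ L ⊆ R}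
      (fun c hcs hc y hy => chain_ub hcs hc hy) σ ⟨h1, h2, hσ⟩
    exact ⟨m, hm.prop.1, hm.prop.2.1, hm.prop.2.2, hσm,
      fun τ ht1 ht2 htR hmτ => hm.eq_of_ge ⟨ht1, ht2, htR⟩ hmτ⟩
  · intro σ h1 h2 hσ
    have hchain : ∀ c ⊆ {τ | σ₁ ≤ τ ∧ τ ≤ σ₂ ∧ substLang τ L ⊆ R ∧ σ ≤ τ},
        IsChain (· ≤ ·) c → ∀ y ∈ c,
        ∃ ub ∈ {τ | σ₁ ≤ τ ∧ τ ≤ σ₂ ∧ substLang τ L ⊆ R ∧ σ ≤ τ}, ∀ z ∈ c, z ≤ ub := by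
      intro c hcs hc y hy
      obtain ⟨ub, hub, hubc⟩ := chain_ub (fun τ hτ => ⟨(hcs hτ).1, (hcs hτ).2.1, (hcs hτ).2.2.1⟩)
        hc hy
      exact ⟨ub, ⟨hub.1, hub.2.1, hub.2.2, (hcs hy).2.2.2.trans (hubc y hy)⟩, hubc⟩
    obtain ⟨m, hσm, hm⟩ := zorn_le_nonempty₀
      {τ | σ₁ ≤ τ ∧ τ ≤ σ₂ ∧ substLang τ L ⊆ R ∧ σ ≤ τ} hchain σ ⟨h1, h2, hσ.le, le_rfl⟩
    refine ⟨m, hm.prop.1, hm.prop.2.1, ?_, hm.prop.2.2.2, ?_⟩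
    · exact le_antisymm hm.prop.2.2.1 (hσ ▸ substLang_mono hm.prop.2.2.2 L)
    · intro τ ht1 ht2 htR hmτ
      exact hm.eq_of_ge ⟨ht1, ht2, htR.le, hm.prop.2.2.2.trans hmτ⟩ hmτ
end

section
/- Let M be a finite monoid, μ : FreeMonoid Σ →* M, S ⊆ M, R := {w : List Σ | μ w ∈ S}, X a Fintype, σ₁ ≤ σ₂ word substitutions, and L ⊆ List (Σ ⊕ X). Call σ a solution if σ₁ ≤ σ ≤ σ₂ and σ(L) ⊆ R, and call a solution σ' maximal if every solution τ with σ' ≤ τ equals σ'. Then: (i) the set of maximal solutions is finite; (ii) every maximal solution σ' satisfies σ' x = σ̂'(x) ∩ σ₂ x for every x ∈ X, where σ̂' is the μ-saturation of σ'. -/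
lemma substWord_key {α X M : Type*} [Monoid M] (μ : FreeMonoid α →* M)
    (σ σ₂ : X → Set (List α)) :
    ∀ w : List (α ⊕ X), ∀ v ∈ substWord (fun x => saturate μ σ x ∩ σ₂ x) w,
      ∃ u ∈ substWord σ w, μ (FreeMonoid.ofList u) = μ (FreeMonoid.ofList v) := by
  intro w
  induction w with
  | nil => intro v hv; exact ⟨v, hv, rfl⟩
  | cons c w ih =>
    rintro v ⟨v₁, hv₁, v₂, hv₂, rfl⟩
    obtain ⟨u₂, hu₂, hμ₂⟩ := ih v₂ hv₂
    cases c with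
    | inl a =>
      refine ⟨[a] ++ u₂, ⟨[a], rfl, u₂, hu₂, rfl⟩, ?_⟩
      have h1 : FreeMonoid.ofList ([a] ++ u₂) = FreeMonoid.ofList [a] * FreeMonoid.ofList u₂ := rfl
      have h2 : FreeMonoid.ofList ([a] ++ v₂) = FreeMonoid.ofList [a] * FreeMonoid.ofList v₂ := rfl
      rw [show v₁ = [a] from hv₁, h2, h1, map_mul, map_mul, hμ₂]
    | inr x =>
      obtain ⟨u₁, hu₁, hμ₁⟩ := hv₁.1
      refine ⟨u₁ ++ u₂, ⟨u₁, hu₁, u₂, hu₂, rfl⟩, ?_⟩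
      have h1 : FreeMonoid.ofList (u₁ ++ u₂) = FreeMonoid.ofList u₁ * FreeMonoid.ofList u₂ := rfl
      have h2 : FreeMonoid.ofList (v₁ ++ v₂) = FreeMonoid.ofList v₁ * FreeMonoid.ofList v₂ := rfl
      rw [h1, h2, map_mul, map_mul, hμ₁, hμ₂]

theorem maximal_solutions_finite_and_saturated {α X M : Type*} [Monoid M] [Fintype M]
    [Fintype X] (μ : FreeMonoid α →* M) (S : Set M) (R : Set (List α))
    (hR : R = {w : List α | μ (FreeMonoid.ofList w) ∈ S})
    (σ₁ σ₂ : X → Set (List α)) (h12 : σ₁ ≤ σ₂) (L : Set (List (α ⊕ X))) :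
    {σ' : X → Set (List α) | (σ₁ ≤ σ' ∧ σ' ≤ σ₂ ∧ substLang σ' L ⊆ R) ∧
      ∀ τ : X → Set (List α), σ₁ ≤ τ → τ ≤ σ₂ → substLang τ L ⊆ R → σ' ≤ τ → τ = σ'}.Finite ∧
    (∀ σ' : X → Set (List α), (σ₁ ≤ σ' ∧ σ' ≤ σ₂ ∧ substLang σ' L ⊆ R) →
      (∀ τ : X → Set (List α), σ₁ ≤ τ → τ ≤ σ₂ → substLang τ L ⊆ R → σ' ≤ τ → τ = σ') →
      ∀ x : X, σ' x = saturate μ σ' x ∩ σ₂ x) := by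
  have sat : ∀ σ' : X → Set (List α), (σ₁ ≤ σ' ∧ σ' ≤ σ₂ ∧ substLang σ' L ⊆ R) →
      (∀ τ : X → Set (List α), σ₁ ≤ τ → τ ≤ σ₂ → substLang τ L ⊆ R → σ' ≤ τ → τ = σ') →
      ∀ x : X, σ' x = saturate μ σ' x ∩ σ₂ x := by
    intro σ' ⟨h1, h2, h3⟩ hmax x
    set τ : X → Set (List α) := fun x => saturate μ σ' x ∩ σ₂ x with hτ
    have hle : σ' ≤ τ := fun x u hu => ⟨⟨u, hu, rfl⟩, h2 x hu⟩
    have hτR : substLang τ L ⊆ R := by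
      rintro v hv
      simp only [substLang, Set.mem_iUnion] at hv
      obtain ⟨w, hw, hvw⟩ := hv
      obtain ⟨u, hu, hμ⟩ := substWord_key μ σ' σ₂ w v hvw
      have : u ∈ R := h3 (by simp only [substLang, Set.mem_iUnion]; exact ⟨w, hw, hu⟩)
      rw [hR] at this ⊢
      simpa [← hμ] using this
    have := hmax τ (fun x => (h1 x).trans (hle x)) (fun x => Set.inter_subset_right) hτR hle
    exact (congrFun this x).symm
  refine ⟨?_, sat⟩
  set F : (X → Set (List α)) → (X → Set M) :=
    fun σ x => (fun u => μ (FreeMonoid.ofList u)) '' σ x with hF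
  apply Set.Finite.of_finite_image (f := F) (Set.toFinite _)
  rintro σ' ⟨hs1, hs2⟩ τ' ⟨ht1, ht2⟩ hFeq
  funext x
  rw [sat σ' hs1 hs2 x, sat τ' ht1 ht2 x]
  have : saturate μ σ' x = saturate μ τ' x := by
    ext v
    constructor <;> intro ⟨u, hu, hμ⟩
    · have : μ (FreeMonoid.ofList u) ∈ F τ' x := by rw [← hFeq]; exact ⟨u, hu, rfl⟩
      obtain ⟨u', hu', hμ'⟩ := this
      exact ⟨u', hu', hμ'.trans hμ⟩
    · have : μ (FreeMonoid.ofList u) ∈ F σ' x := by rw [hFeq]; exact ⟨u, hu, rfl⟩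
      obtain ⟨u', hu', hμ'⟩ := this
      exact ⟨u', hu', hμ'.trans hμ⟩
  rw [this]
end

section
/- Let M be a finite monoid, μ : FreeMonoid Σ →* M, S ⊆ M, R := {w : List Σ | μ w ∈ S}, X a Fintype, σ₁ ≤ σ₂ word substitutions, and L ⊆ List (Σ ⊕ X). Call σ a solution if σ₁ ≤ σ ≤ σ₂ and σ(L) ⊆ R. If σ₂ x is a regular language (Language.IsRegular) for every x ∈ X, then every maximal solution σ' (i.e., every solution τ with σ' ≤ τ equals σ') has σ' x regular for every x ∈ X. -/
private noncomputable def prodDFA {α M : Type*} [Monoid M] [Fintype M] (μ : FreeMonoid α →* M)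
    {s : Type} (A : DFA α s) (T : Set M) : DFA α (s × Fin (Fintype.card M)) where
  step := fun q a => (A.step q.1 a,
    Fintype.equivFin M ((Fintype.equivFin M).symm q.2 * μ (FreeMonoid.of a)))
  start := (A.start, Fintype.equivFin M 1)
  accept := {q | q.1 ∈ A.accept ∧ (Fintype.equivFin M).symm q.2 ∈ T}

private lemma prodDFA_evalFrom {α M : Type*} [Monoid M] [Fintype M] (μ : FreeMonoid α →* M)
    {s : Type} (A : DFA α s) (T : Set M) (p : s) (m : M) (w : List α) :
    (prodDFA μ A T).evalFrom (p, Fintype.equivFin M m) w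
      = (A.evalFrom p w, Fintype.equivFin M (m * μ (FreeMonoid.ofList w))) := by
  induction w generalizing p m with
  | nil => simp [DFA.evalFrom, FreeMonoid.ofList_nil]
  | cons a w ih =>
      simp only [DFA.evalFrom, List.foldl_cons] at *
      have : (prodDFA μ A T).step (p, Fintype.equivFin M m) a
          = (A.step p a, Fintype.equivFin M (m * μ (FreeMonoid.of a))) := by
        simp [prodDFA]
      rw [this, ih, FreeMonoid.ofList_cons, MonoidHom.map_mul, ← mul_assoc]

private lemma regular_inter_recog {α M : Type*} [Monoid M] [Fintype M]
    (μ : FreeMonoid α →* M) (P : Set (List α)) (T : Set M)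
    (hP : Language.IsRegular (P : Language α)) :
    Language.IsRegular ((P ∩ {w | μ (FreeMonoid.ofList w) ∈ T} : Set (List α)) : Language α) := by
  obtain ⟨s, fin, A, hA⟩ := hP
  refine ⟨s × Fin (Fintype.card M), by infer_instance, prodDFA μ A T, ?_⟩
  ext w
  have h := prodDFA_evalFrom μ A T A.start 1 w
  simp only [DFA.mem_accepts, DFA.eval]
  rw [show (prodDFA μ A T).start = (A.start, Fintype.equivFin M 1) from rfl, h]
  have hmem : w ∈ P ↔ A.evalFrom A.start w ∈ A.accept := by
    rw [← hA]; rfl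
  simp only [prodDFA, Set.mem_setOf_eq, one_mul, Equiv.symm_apply_apply]
  constructor
  · rintro ⟨h1, h2⟩; exact ⟨hmem.mpr h1, h2⟩
  · rintro ⟨h1, h2⟩; exact ⟨hmem.mp h1, h2⟩

theorem maximal_solutions_regular {α X M : Type*} [Monoid M] [Fintype M] [Fintype X]
    (μ : FreeMonoid α →* M) (S : Set M) (R : Set (List α))
    (hR : R = {w : List α | μ (FreeMonoid.ofList w) ∈ S})
    (σ₁ σ₂ : X → Set (List α)) (h12 : σ₁ ≤ σ₂) (L : Set (List (α ⊕ X)))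
    (hreg : ∀ x : X, Language.IsRegular (σ₂ x : Language α)) :
    ∀ σ' : X → Set (List α), (σ₁ ≤ σ' ∧ σ' ≤ σ₂ ∧ substLang σ' L ⊆ R) →
      (∀ τ : X → Set (List α), σ₁ ≤ τ → τ ≤ σ₂ → substLang τ L ⊆ R → σ' ≤ τ → τ = σ') →
      ∀ x : X, Language.IsRegular (σ' x : Language α) := by
  rintro σ' ⟨hσ1, hσ2, hσR⟩ hmax x
  set τ : X → Set (List α) :=
    fun y => {u ∈ σ₂ y | ∃ v ∈ σ' y, μ (FreeMonoid.ofList u) = μ (FreeMonoid.ofList v)} with hτ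
  -- τ mimics σ' on every word
  have key : ∀ w : List (α ⊕ X), ∀ u ∈ substWord τ w,
      ∃ v ∈ substWord σ' w, μ (FreeMonoid.ofList u) = μ (FreeMonoid.ofList v) := by
    intro w
    induction w with
    | nil => rintro u hu; exact ⟨u, hu, rfl⟩
    | cons c w ih =>
        rintro u ⟨u₁, hu₁, u₂, hu₂, rfl⟩
        obtain ⟨v₂, hv₂, he₂⟩ := ih u₂ hu₂
        cases c with
        | inl a =>
            refine ⟨u₁ ++ v₂, ⟨u₁, hu₁, v₂, hv₂, rfl⟩, ?_⟩
            rw [FreeMonoid.ofList_append, FreeMonoid.ofList_append, map_mul, map_mul, he₂]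
        | inr y =>
            obtain ⟨_, v₁, hv₁, he₁⟩ := hu₁
            refine ⟨v₁ ++ v₂, ⟨v₁, hv₁, v₂, hv₂, rfl⟩, ?_⟩
            rw [FreeMonoid.ofList_append, FreeMonoid.ofList_append, map_mul, map_mul, he₁, he₂]
  have hτR : substLang τ L ⊆ R := by
    rintro u hu
    simp only [substLang, Set.mem_iUnion] at hu
    obtain ⟨w, hw, hu⟩ := hu
    obtain ⟨v, hv, he⟩ := key w u hu
    have : v ∈ R := hσR (by exact Set.mem_biUnion hw hv)
    rw [hR] at this ⊢
    simpa [he] using this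
  have hστ : σ' ≤ τ := fun y u hu => ⟨hσ2 y hu, u, hu, rfl⟩
  have hτeq : τ = σ' :=
    hmax τ (fun y u hu => hστ y (hσ1 y hu)) (fun y u hu => hu.1) hτR hστ
  -- hence σ' x is an intersection of a regular language and a μ-recognized one
  have hset : σ' x = σ₂ x ∩ {u | μ (FreeMonoid.ofList u) ∈
      (fun v => μ (FreeMonoid.ofList v)) '' (σ' x)} := by
    ext u
    constructor
    · intro hu; exact ⟨hσ2 x hu, ⟨u, hu, rfl⟩⟩
    · rintro ⟨h1, v, hv, he⟩
      have : u ∈ τ x := ⟨h1, v, hv, he.symm⟩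
      rw [hτeq] at this; exact this
  rw [hset]
  exact regular_inter_recog μ (σ₂ x) _ (hreg x)
end

section
/- Let Q be a Fintype, δ : Q → Σ → Set Q, and I, F ⊆ Q (a Büchi automaton). Let x, y : ℕ → List Σ be sequences of nonempty finite words such that for every i ∈ ℕ and all states p, q : (Reach (x i) p q ↔ Reach (y i) p q) and (ReachF (x i) p q ↔ ReachF (y i) p q). Then the ω-word concat x is Büchi-accepted if and only if the ω-word concat y is Büchi-accepted. -/
/-- A run of the finite word `w` from `p` to `q` in the automaton with transitions `δ`. -/
def IsRun {α Q : Type*} (δ : Q → α → Set Q) (w : List α) (p q : Q)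
    (ρ : Fin (w.length + 1) → Q) : Prop :=
  ρ 0 = p ∧ ρ (Fin.last w.length) = q ∧
    ∀ i : Fin w.length, ρ i.succ ∈ δ (ρ i.castSucc) (w.get i)

/-- `q` is reachable from `p` reading the word `w`. -/
def Reach {α Q : Type*} (δ : Q → α → Set Q) (w : List α) (p q : Q) : Prop :=
  ∃ ρ : Fin (w.length + 1) → Q, IsRun δ w p q ρ

/-- `q` is reachable from `p` reading `w` via a run visiting the set `F`. -/
def ReachF {α Q : Type*} (δ : Q → α → Set Q) (F : Set Q) (w : List α) (p q : Q) : Prop :=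
  ∃ ρ : Fin (w.length + 1) → Q, IsRun δ w p q ρ ∧ ∃ i, ρ i ∈ F

/-- Büchi acceptance of an ω-word. -/
def BuchiAccepted {α Q : Type*} (δ : Q → α → Set Q) (I F : Set Q) (u : ℕ → α) : Prop :=
  ∃ ρ : ℕ → Q, ρ 0 ∈ I ∧ (∀ n, ρ (n + 1) ∈ δ (ρ n) (u n)) ∧ {n | ρ n ∈ F}.Infinite

/-- Partial sums of the lengths of the blocks `x 0, x 1, …`. -/
def psum {α : Type*} (x : ℕ → List α) : ℕ → ℕ
  | 0 => 0
  | k + 1 => psum x k + (x k).length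

/-- `u` is the ω-word obtained by concatenating the blocks `x 0, x 1, …`. -/
def IsConcat {α : Type*} (x : ℕ → List α) (u : ℕ → α) : Prop :=
  ∀ (k : ℕ) (j : Fin (x k).length), u (psum x k + j) = (x k).get j

section Aux

variable {α Q : Type*} (δ : Q → α → Set Q) (I F : Set Q)

lemma psum_lt_succ (x : ℕ → List α) (hx : ∀ i, x i ≠ []) (k : ℕ) :
    psum x k < psum x (k + 1) := by
  have := List.length_pos_iff.2 (hx k)
  simp only [psum]; omega

lemma psum_succ (x : ℕ → List α) (k : ℕ) :
    psum x (k + 1) = psum x k + (x k).length := rfl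

lemma le_psum (x : ℕ → List α) (hx : ∀ i, x i ≠ []) (k : ℕ) : k ≤ psum x k := by
  induction k with
  | zero => simp [psum]
  | succ n ih => have := psum_lt_succ x hx n; omega

lemma psum_mono (x : ℕ → List α) (hx : ∀ i, x i ≠ []) : StrictMono (psum x) :=
  strictMono_nat_of_lt_succ (psum_lt_succ x hx)

/-- The index of the block containing position `n`. -/
def blk {α : Type*} (x : ℕ → List α) (n : ℕ) : ℕ :=
  Nat.findGreatest (fun k => psum x k ≤ n) n

lemma blk_le (x : ℕ → List α) (n : ℕ) : psum x (blk x n) ≤ n :=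
  Nat.findGreatest_spec (P := fun k => psum x k ≤ n) (Nat.zero_le n) (by simp [psum])

lemma lt_blk_succ (x : ℕ → List α) (hx : ∀ i, x i ≠ []) (n : ℕ) :
    n < psum x (blk x n + 1) := by
  by_contra h
  push_neg at h
  have h1 : blk x n + 1 ≤ n := le_trans (le_psum x hx _) h
  exact Nat.findGreatest_is_greatest (lt_add_one (blk x n)) h1 h

lemma blk_eq (x : ℕ → List α) (hx : ∀ i, x i ≠ []) {n k : ℕ}
    (h1 : psum x k ≤ n) (h2 : n < psum x (k + 1)) : blk x n = k := by
  have hm := psum_mono x hx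
  rcases lt_trichotomy (blk x n) k with h | h | h
  · have : psum x (blk x n + 1) ≤ psum x k := hm.monotone (by omega)
    have := lt_blk_succ x hx n; omega
  · exact h
  · have : psum x (k + 1) ≤ psum x (blk x n) := hm.monotone (by omega)
    have := blk_le x n; omega

/-- Acceptance at the level of blocks. -/
def BlockAcc (x : ℕ → List α) : Prop :=
  ∃ σ : ℕ → Q, σ 0 ∈ I ∧ (∀ k, Reach δ (x k) (σ k) (σ (k + 1))) ∧
    {k | ReachF δ F (x k) (σ k) (σ (k + 1))}.Infinite

lemma accepted_iff_blockAcc (x : ℕ → List α) (hx : ∀ i, x i ≠ [])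
    (u : ℕ → α) (hu : IsConcat x u) :
    BuchiAccepted δ I F u ↔ BlockAcc δ I F x := by
  constructor
  · rintro ⟨ρ, hI, hstep, hinf⟩
    refine ⟨fun k => ρ (psum x k), hI, ?_, ?_⟩
    · -- each block admits a run
      intro k
      refine ⟨fun i => ρ (psum x k + i.val), rfl, ?_, ?_⟩
      · show ρ (psum x k + (x k).length) = _
        rw [← psum_succ]
      · intro i
        have he := hu k i
        show ρ (psum x k + (i.val + 1)) ∈ δ (ρ (psum x k + i.val)) ((x k).get i)
        rw [← Nat.add_assoc, ← he]
        exact hstep (psum x k + i.val)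
    · apply Set.infinite_of_forall_exists_gt
      intro K
      obtain ⟨n, hnF, hn⟩ := hinf.exists_gt (psum x (K + 1))
      set k := blk x n with hk
      have h1 : psum x k ≤ n := blk_le x n
      have h2 : n < psum x (k + 1) := lt_blk_succ x hx n
      have hKk : K < k := by
        by_contra h
        push_neg at h
        have : psum x (k + 1) ≤ psum x (K + 1) := (psum_mono x hx).monotone (by omega)
        omega
      refine ⟨k, ?_, hKk⟩
      have hlen : n - psum x k < (x k).length + 1 := by
        have := psum_succ x k; omega
      refine ⟨fun i => ρ (psum x k + i.val), ⟨rfl, ?_, ?_⟩, ⟨⟨n - psum x k, hlen⟩, ?_⟩⟩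
      · show ρ (psum x k + (x k).length) = _
        rw [← psum_succ]
      · intro i
        have he := hu k i
        show ρ (psum x k + (i.val + 1)) ∈ δ (ρ (psum x k + i.val)) ((x k).get i)
        rw [← Nat.add_assoc, ← he]
        exact hstep (psum x k + i.val)
      · show ρ (psum x k + (n - psum x k)) ∈ F
        rwa [Nat.add_sub_cancel' h1]
  · rintro ⟨σ, hI, hr, hinf⟩
    have hch : ∀ k, ∃ ρk : Fin ((x k).length + 1) → Q,
        IsRun δ (x k) (σ k) (σ (k + 1)) ρk ∧
        (ReachF δ F (x k) (σ k) (σ (k + 1)) → ∃ i, ρk i ∈ F) := by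
      intro k
      by_cases h : ReachF δ F (x k) (σ k) (σ (k + 1))
      · obtain ⟨ρk, h1, h2⟩ := h; exact ⟨ρk, h1, fun _ => h2⟩
      · obtain ⟨ρk, h1⟩ := hr k; exact ⟨ρk, h1, fun hc => absurd hc h⟩
    choose R hR1 hR2 using hch
    have hsub : ∀ n, n - psum x (blk x n) < (x (blk x n)).length + 1 := by
      intro n
      have h1 := blk_le x n
      have h2 := lt_blk_succ x hx n
      have := psum_succ x (blk x n); omega
    set ρ : ℕ → Q := fun n => R (blk x n) ⟨n - psum x (blk x n), hsub n⟩ with hρ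
    have rho_eq : ∀ n k (hk : blk x n = k) (i : Fin ((x k).length + 1))
        (hi : i.val = n - psum x k), ρ n = R k i := by
      intro n k hk i hi
      subst hk
      show R (blk x n) _ = R (blk x n) i
      congr 1
      exact Fin.ext hi.symm
    have key : ∀ k (i : Fin ((x k).length + 1)), ρ (psum x k + i.val) = R k i := by
      intro k i
      rcases Nat.lt_or_ge i.val (x k).length with h | h
      · refine rho_eq _ k (blk_eq x hx (by omega) ?_) i (by omega)
        rw [psum_succ]; omega
      · have hi : i.val = (x k).length := by have := i.isLt; omega
        have hn : psum x k + i.val = psum x (k + 1) := by rw [psum_succ, hi]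
        rw [hn]
        have e1 : ρ (psum x (k + 1)) = R (k + 1) ⟨0, by omega⟩ :=
          rho_eq _ (k + 1) (blk_eq x hx le_rfl (psum_lt_succ x hx _)) _ (by simp)
        have e2 : R (k + 1) ⟨0, by omega⟩ = σ (k + 1) := (hR1 (k + 1)).1
        have e3 : R k i = σ (k + 1) := by
          have : i = Fin.last (x k).length := Fin.ext (by simpa using hi)
          rw [this]; exact (hR1 k).2.1
        rw [e1, e2, e3]
    refine ⟨ρ, ?_, ?_, ?_⟩
    · have : ρ 0 = R 0 0 := by
        have := key 0 0
        simpa [psum] using this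
      rw [this]
      rw [(hR1 0).1]
      exact hI
    · intro n
      set k := blk x n with hk
      have h1 : psum x k ≤ n := blk_le x n
      have h2 : n < psum x (k + 1) := lt_blk_succ x hx n
      have hlen : n - psum x k < (x k).length := by have := psum_succ x k; omega
      set i : Fin (x k).length := ⟨n - psum x k, hlen⟩ with hi
      have ec : ρ n = R k i.castSucc := by
        have := key k i.castSucc
        rwa [show psum x k + (i.castSucc).val = n by simp [hi]; omega] at this
      have es : ρ (n + 1) = R k i.succ := by
        have := key k i.succ
        rwa [show psum x k + (i.succ).val = n + 1 by simp [hi]; omega] at this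
      have hun : u n = (x k).get i := by
        have := hu k i
        rwa [show psum x k + i.val = n by simp [hi]; omega] at this
      rw [ec, es, hun]
      exact (hR1 k).2.2 i
    · apply Set.infinite_of_forall_exists_gt
      intro K
      obtain ⟨k, hkS, hKk⟩ := hinf.exists_gt K
      obtain ⟨i, hiF⟩ := hR2 k hkS
      refine ⟨psum x k + i.val, ?_, ?_⟩
      · show ρ _ ∈ F
        rw [key k i]; exact hiF
      · have := le_psum x hx k; omega

end Aux

theorem buchi_strong_recognition {α Q : Type*} [Fintype Q]
    (δ : Q → α → Set Q) (I F : Set Q)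
    (x y : ℕ → List α) (hx : ∀ i, x i ≠ []) (hy : ∀ i, y i ≠ [])
    (hReach : ∀ (i : ℕ) (p q : Q), Reach δ (x i) p q ↔ Reach δ (y i) p q)
    (hReachF : ∀ (i : ℕ) (p q : Q), ReachF δ F (x i) p q ↔ ReachF δ F (y i) p q)
    (u v : ℕ → α) (hu : IsConcat x u) (hv : IsConcat y v) :
    BuchiAccepted δ I F u ↔ BuchiAccepted δ I F v := by
  rw [accepted_iff_blockAcc δ I F x hx u hu, accepted_iff_blockAcc δ I F y hy v hv]
  constructor <;> rintro ⟨σ, h1, h2, h3⟩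
  · exact ⟨σ, h1, fun k => (hReach k _ _).1 (h2 k),
      h3.mono fun k hk => (hReachF k _ _).1 hk⟩
  · exact ⟨σ, h1, fun k => (hReach k _ _).2 (h2 k),
      h3.mono fun k hk => (hReachF k _ _).2 hk⟩
end

section
/- (Positional determinacy of parity games, Gurevich–Harrington.) For every parity-game arena (V, V₀, E, χ) with E v nonempty for all v and Set.range χ finite, there exist positional strategies f₀ and f₁ such that for every vertex v : V, either every play from v that is consistent with f₀ for player 0 is won by player 0, or every play from v that is consistent with f₁ for player 1 is won by player 1. (In particular, the two positional winning regions partition V.) -/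
/-!
Zielonka's induction on the number of colours of a subgame `S`. Let `m` be the least colour of
`S` and σ the player who likes its parity. Remove the opponent's positional winning region; the
opponent cannot escape from the rest, `X`. Inside `X` remove σ's attractor of the positions of
colour `m`; the rest, `Y`, has fewer colours, and the opponent wins nowhere in `Y`, since a win
there would extend to a win in `S`. So σ wins all of `Y`, and hence all of `X`: a play that is not
attracted to colour `m` infinitely often eventually stays in `Y`.

Positional strategies winning from different positions are merged into one by always playing
the least, in a fixed well-order, strategy that wins from the current position: along a play this
choice never increases, so it stabilises. The attractor is a Büchi winning region once its target
is made absorbing, so it is merged the same way.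
-/

open Set Filter Function

namespace ParityGame

variable {V : Type*}

noncomputable def payoff (χ : V → ℕ) (p : ℕ → V) : ℕ := sInf {c | {n | χ (p n) = c}.Infinite}

def Buchi (M : Set V) (p : ℕ → V) : Prop := {n | p n ∈ M}.Infinite

def PrefixIndependent (win : (ℕ → V) → Prop) : Prop := ∀ p k, win (fun n => p (n + k)) ↔ win p

def IsPlay (E : V → Set V) (S : Set V) (p : ℕ → V) : Prop :=
  (∀ n, p n ∈ S) ∧ ∀ n, p (n + 1) ∈ E (p n)

def Consistent (P : Set V) (f : V → V) (p : ℕ → V) : Prop := ∀ n, p n ∈ P → p (n + 1) = f (p n)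

def IsStrategy (E : V → Set V) (S : Set V) (f : V → V) : Prop := ∀ v ∈ S, f v ∈ E v ∩ S

def IsSubgame (E : V → Set V) (S : Set V) : Prop := ∀ v ∈ S, (E v ∩ S).Nonempty

/-- A player is represented by the set `P` of positions it owns. -/
def winSet (E : V → Set V) (S P : Set V) (win : (ℕ → V) → Prop) (f : V → V) : Set V :=
  {v | v ∈ S ∧ ∀ p, IsPlay E S p → p 0 = v → Consistent P f p → win p}

def winRegion (E : V → Set V) (S P : Set V) (win : (ℕ → V) → Prop) : Set V :=
  {v | ∃ f, IsStrategy E S f ∧ v ∈ winSet E S P win f}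

/-- `T` is a trap inside `S` for the owner of `P`. -/
structure IsTrap (E : V → Set V) (S P T : Set V) : Prop where
  subset : T ⊆ S
  succ_subset : ∀ u ∈ T, u ∈ P → E u ∩ S ⊆ T
  exists_succ : ∀ u ∈ T, u ∉ P → (E u ∩ T).Nonempty

open Classical in
noncomputable def absorb (E : V → Set V) (M : Set V) : V → Set V := M.piecewise (fun v => {v}) E

/-- Once `M` is made absorbing, visiting `M` infinitely often means reaching `M`, so this is the
attractor of `M` for the owner of `P`. -/
def attractor (E : V → Set V) (S P M : Set V) : Set V := winRegion (absorb E M) S P (Buchi M)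

theorem infinite_setOf_add_iff (q : ℕ → Prop) (k : ℕ) :
    {n | q (n + k)}.Infinite ↔ {n | q n}.Infinite := by
  rw [← Nat.frequently_atTop_iff_infinite, ← Nat.frequently_atTop_iff_infinite,
    ← frequently_map (P := q) (m := fun n => n + k), map_add_atTop_eq_nat]

theorem prefixIndependent_buchi (M : Set V) : PrefixIndependent (Buchi M) :=
  fun p k => infinite_setOf_add_iff (fun n => p n ∈ M) k

theorem prefixIndependent_payoff (χ : V → ℕ) (ε : ℕ → Prop) :
    PrefixIndependent fun p => ε (payoff χ p) := by
  intro p k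
  suffices payoff χ (fun n => p (n + k)) = payoff χ p by
    show ε _ ↔ ε _
    rw [this]
  unfold payoff
  congr 1
  ext c
  exact infinite_setOf_add_iff (fun n => χ (p n) = c) k

theorem payoff_eq_of_infinite {χ : V → ℕ} {p : ℕ → V} {m : ℕ}
    (hm : {n | χ (p n) = m}.Infinite) (hle : ∀ n, m ≤ χ (p n)) : payoff χ p = m := by
  refine le_antisymm (Nat.sInf_le hm) (le_csInf ⟨m, hm⟩ fun c hc => ?_)
  obtain ⟨n, rfl⟩ := hc.nonempty
  exact hle n

variable {E : V → Set V} {S T P M : Set V} {win : (ℕ → V) → Prop} {f g h : V → V}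
  {p : ℕ → V}

theorem IsPlay.shift (hp : IsPlay E S p) (k : ℕ) : IsPlay E S fun n => p (n + k) :=
  ⟨fun n => hp.1 _, fun n => by simpa only [Nat.add_right_comm n 1 k] using hp.2 (n + k)⟩

theorem Consistent.shift (hc : Consistent P f p) (k : ℕ) : Consistent P f fun n => p (n + k) :=
  fun n hn => by simpa only [Nat.add_right_comm n 1 k] using hc (n + k) hn

theorem IsSubgame.exists_isStrategy (hS : IsSubgame E S) : ∃ f, IsStrategy E S f := by
  classical
  exact ⟨fun v => if hv : v ∈ S then (hS v hv).some else v,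
    fun v hv => by simpa only [dif_pos hv] using (hS v hv).some_mem⟩

theorem winSet_subset_winRegion (hf : IsStrategy E S f) :
    winSet E S P win f ⊆ winRegion E S P win :=
  fun _ hv => ⟨f, hf, hv⟩

theorem winRegion_subset : winRegion E S P win ⊆ S :=
  fun _ ⟨_, _, hv⟩ => hv.1

theorem mem_winSet_of_mem_of_succ (hwin : PrefixIndependent win) {v w : V}
    (hv : v ∈ winSet E S P win f) (hw : w ∈ E v ∩ S) (hvw : v ∈ P → w = f v) :
    w ∈ winSet E S P win f := by
  refine ⟨hw.2, fun q hq hq0 hqc => ?_⟩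
  let r : ℕ → V := fun | 0 => v | n + 1 => q n
  have hr : IsPlay E S r := by
    refine ⟨fun | 0 => hv.1 | n + 1 => hq.1 n, fun | 0 => ?_ | n + 1 => hq.2 n⟩
    show q 0 ∈ E v
    exact hq0 ▸ hw.1
  have hrc : Consistent P f r := fun
    | 0, hP => hq0.trans (hvw hP)
    | n + 1, hP => hqc n hP
  exact (hwin r 1).2 (hv.2 r hr rfl hrc)

/-- Once in the winning set of `g`, the play stays there and follows `g`. -/
theorem win_of_agree (hwin : PrefixIndependent win) (hg : IsStrategy E S g)
    (htrap : ∀ u ∈ S, u ∉ P → E u ∩ T ⊆ S)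
    (hh : ∀ u ∈ winSet E S P win g ∩ T, u ∈ P → h u = g u)
    (hp : IsPlay E T p) (hc : Consistent P h p) {k : ℕ} (hk : p k ∈ winSet E S P win g) :
    win p := by
  have hcg : ∀ n, p (n + k) ∈ winSet E S P win g → p (n + k) ∈ P →
      p (n + 1 + k) = g (p (n + k)) := fun n hn hP =>
    ((hc.shift k) n hP).trans (hh _ ⟨hn, hp.1 _⟩ hP)
  have hmem : ∀ n, p (n + k) ∈ winSet E S P win g := by
    intro n
    induction n with
    | zero => simpa using hk
    | succ n ih =>
      refine mem_winSet_of_mem_of_succ hwin ih ⟨(hp.shift k).2 n, ?_⟩ (hcg n ih)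
      by_cases hP : p (n + k) ∈ P
      · exact hcg n ih hP ▸ (hg _ ih.1).2
      · exact htrap _ ih.1 hP ⟨(hp.shift k).2 n, (hp.shift k).1 (n + 1)⟩
  exact (hwin p k).1 <| (hmem 0).2 _ ⟨fun n => (hmem n).1, (hp.shift k).2⟩ (by simp)
    fun n hP => hcg n (hmem n) hP

theorem exists_uniform_winning_strategy (hwin : PrefixIndependent win) (hS : IsSubgame E S) :
    ∃ g, IsStrategy E S g ∧ winRegion E S P win ⊆ winSet E S P win g := by
  classical
  obtain ⟨f₀, hf₀⟩ := hS.exists_isStrategy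
  let C : V → Set (V → V) := fun u => {f | IsStrategy E S f ∧ u ∈ winSet E S P win f}
  let ι : (V → V) ↪ Cardinal := embeddingToCardinal
  -- at each position, the winning strategy that comes first in a fixed well-order
  let best : V → V → V := fun u => if hu : (C u).Nonempty then argminOn ι (C u) hu else f₀
  have best_mem : ∀ u ∈ winRegion E S P win, best u ∈ C u := fun u hu => by
    simpa only [best, dif_pos (show (C u).Nonempty from hu)] using argminOn_mem ι (C u) hu
  have best_le : ∀ u, ∀ f ∈ C u, ι (best u) ≤ ι f := fun u f hf => by
    simpa only [best, dif_pos (show (C u).Nonempty from ⟨f, hf⟩)] using argminOn_le ι (C u) hf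
  have best_isStrategy : ∀ u, IsStrategy E S (best u) := fun u => by
    by_cases hu : (C u).Nonempty
    · exact (best_mem u hu).1
    · simpa only [best, dif_neg hu] using hf₀
  refine ⟨fun u => best u u, fun u hu => best_isStrategy u u hu, fun v hv => ?_⟩
  refine ⟨winRegion_subset hv, fun p hp hp0 hc => ?_⟩
  have hnext : ∀ n, p n ∈ winRegion E S P win → best (p n) ∈ C (p (n + 1)) := fun n hn =>
    ⟨(best_mem _ hn).1, mem_winSet_of_mem_of_succ hwin (best_mem _ hn).2 ⟨hp.2 n, hp.1 _⟩ (hc n)⟩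
  have hreg : ∀ n, p n ∈ winRegion E S P win := by
    intro n
    induction n with
    | zero => exact hp0 ▸ hv
    | succ n ih => exact ⟨_, hnext n ih⟩
  -- along the play the chosen strategy never increases, so it is eventually constant
  obtain ⟨N, hN⟩ := WellFoundedLT.antitone_chain_condition
    (antitone_nat_of_succ_le (f := fun n => ι (best (p n))) fun n =>
      best_le _ _ (hnext n (hreg n)))
  have hconst : ∀ n, best (p (n + N)) = best (p N) := fun n => ι.injective (hN _ (by omega)).symm
  exact (hwin p N).1 <| (best_mem _ (hreg N)).2.2 _ (hp.shift N) (by simp) fun n hP =>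
    (hc.shift N n hP).trans (congrFun (hconst n) _)

theorem mem_winRegion_of_succ_mem (hwin : PrefixIndependent win) (hS : IsSubgame E S) {v w : V}
    (hv : v ∈ S) (hvP : v ∈ P) (hw : w ∈ E v ∩ S) (hwR : w ∈ winRegion E S P win) :
    v ∈ winRegion E S P win := by
  classical
  by_contra hvR
  obtain ⟨g, hg, hgR⟩ := exists_uniform_winning_strategy hwin hS (P := P)
  have hne : ∀ u ∈ winSet E S P win g, u ≠ v := fun u hu huv =>
    hvR (huv ▸ winSet_subset_winRegion hg hu)
  refine hvR ⟨update g v w, fun u hu => ?_, hv, fun p hp hp0 hc => ?_⟩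
  · rcases eq_or_ne u v with rfl | huv
    · simpa using hw
    · simpa [update_of_ne huv] using hg u hu
  · refine win_of_agree hwin hg (fun _ _ _ => inter_subset_right)
      (fun u hu _ => update_of_ne (hne u hu.1) _ _) hp hc (k := 1) ?_
    rw [hc 0 (hp0 ▸ hvP), hp0, update_self]
    exact hgR hwR

theorem mem_winRegion_of_forall_succ_mem (hwin : PrefixIndependent win) (hS : IsSubgame E S)
    {v : V} (hv : v ∈ S) (hsucc : E v ∩ S ⊆ winRegion E S P win) :
    v ∈ winRegion E S P win := by
  obtain ⟨g, hg, hgR⟩ := exists_uniform_winning_strategy hwin hS (P := P)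
  refine ⟨g, hg, hv, fun p hp hp0 hc => ?_⟩
  exact win_of_agree hwin hg (fun _ _ _ => inter_subset_right) (fun _ _ _ => rfl) hp hc (k := 1)
    (hgR (hsucc ⟨hp0 ▸ hp.2 0, hp.1 1⟩))

theorem isTrap_diff_winRegion (hwin : PrefixIndependent win) (hS : IsSubgame E S) :
    IsTrap E S P (S \ winRegion E S P win) where
  subset := sdiff_subset
  succ_subset u hu hP w hw :=
    ⟨hw.2, fun hwR => hu.2 (mem_winRegion_of_succ_mem hwin hS hu.1 hP hw hwR)⟩
  exists_succ u hu hP := by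
    by_contra hempty
    refine hu.2 (mem_winRegion_of_forall_succ_mem hwin hS hu.1 fun w hw => ?_)
    by_contra hwR
    exact hempty ⟨w, hw.1, hw.2, hwR⟩

theorem IsTrap.isSubgame (hT : IsTrap E S P T) (hS : IsSubgame E S) : IsSubgame E T := by
  intro u hu
  by_cases hP : u ∈ P
  · obtain ⟨w, hw⟩ := hS u (hT.subset hu)
    exact ⟨w, hw.1, hT.succ_subset u hu hP hw⟩
  · exact hT.exists_succ u hu hP

/-- The owner of `P` plays in `T` until the play reaches its winning region in `S`. -/
theorem winRegion_subset_winRegion (hwin : PrefixIndependent win) (hS : IsSubgame E S)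
    (hTS : T ⊆ S) (hT : ∀ u ∈ T, u ∉ P → E u ∩ S ⊆ T ∪ winRegion E S P win) :
    winRegion E T P win ⊆ winRegion E S P win := by
  classical
  rintro v ⟨gT, hgT, hv⟩
  obtain ⟨g, hg, hgR⟩ := exists_uniform_winning_strategy hwin hS (P := P)
  set W := winRegion E S P win
  refine ⟨(T \ W).piecewise gT g, fun u hu => ?_, hTS hv.1, fun p hp hp0 hc => ?_⟩
  · by_cases huT : u ∈ T \ W
    · rw [piecewise_eq_of_mem _ _ _ huT]
      exact ⟨(hgT u huT.1).1, hTS (hgT u huT.1).2⟩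
    · rw [piecewise_eq_of_notMem _ _ _ huT]
      exact hg u hu
  by_cases hW : ∃ k, p k ∈ W
  · obtain ⟨k, hk⟩ := hW
    refine win_of_agree hwin hg (fun _ _ _ => inter_subset_right) (fun u hu _ => ?_) hp hc
      (hgR hk)
    exact piecewise_eq_of_notMem _ _ _ fun h => h.2 (winSet_subset_winRegion hg hu.1)
  · simp only [not_exists] at hW
    have hpT : IsPlay E (S \ W) p := ⟨fun n => ⟨hp.1 n, hW n⟩, hp.2⟩
    refine win_of_agree hwin hgT (fun u hu hP w hw => ?_)
      (fun u hu _ => piecewise_eq_of_mem _ _ _ (show u ∈ T \ W from ⟨hu.1.1, hu.2.2⟩)) hpT hc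
      (k := 0) (hp0 ▸ hv)
    exact (hT u hu hP ⟨hw.1, hw.2.1⟩).resolve_right hw.2.2

theorem winRegion_subset_of_isTrap (hwin : PrefixIndependent win) (hS : IsSubgame E S)
    (hT : IsTrap E (S \ winRegion E S Pᶜ win) P T) :
    winRegion E T Pᶜ win ⊆ winRegion E S Pᶜ win := by
  refine winRegion_subset_winRegion hwin hS (hT.subset.trans sdiff_subset) fun u hu hP w hw => ?_
  by_cases hwW : w ∈ winRegion E S Pᶜ win
  · exact .inr hwW
  · exact .inl (hT.succ_subset u hu (not_not.1 hP) ⟨hw.1, hw.2, hwW⟩)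

theorem absorb_of_mem {v : V} (hv : v ∈ M) : absorb E M v = {v} := by
  classical
  exact piecewise_eq_of_mem _ _ _ hv

theorem absorb_of_notMem {v : V} (hv : v ∉ M) : absorb E M v = E v := by
  classical
  exact piecewise_eq_of_notMem _ _ _ hv

theorem IsSubgame.absorb (hS : IsSubgame E S) (M : Set V) : IsSubgame (absorb E M) S := by
  intro v hv
  by_cases hvM : v ∈ M
  · exact ⟨v, by simp [absorb_of_mem hvM], hv⟩
  · simpa only [absorb_of_notMem hvM] using hS v hv

theorem subset_attractor (hS : IsSubgame E S) (hM : M ⊆ S) : M ⊆ attractor E S P M := by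
  intro v hv
  obtain ⟨f, hf⟩ := (hS.absorb M).exists_isStrategy
  refine ⟨f, hf, hM hv, fun p hp hp0 _ => ?_⟩
  have hconst : ∀ n, p n = v := by
    intro n
    induction n with
    | zero => exact hp0
    | succ n ih => simpa [ih, absorb_of_mem hv] using hp.2 n
  simpa [Buchi, hconst, hv] using infinite_univ

theorem isTrap_diff_attractor (hS : IsSubgame E S) (hM : M ⊆ S) :
    IsTrap E S P (S \ attractor E S P M) := by
  have hT := isTrap_diff_winRegion (prefixIndependent_buchi M) (hS.absorb M) (P := P)
  have hnotM : ∀ u ∈ S \ attractor E S P M, u ∉ M := fun u hu huM =>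
    hu.2 (subset_attractor hS hM huM)
  refine ⟨hT.subset, fun u hu hP => ?_, fun u hu hP => ?_⟩
  · rw [← absorb_of_notMem (E := E) (hnotM u hu)]
    exact hT.succ_subset u hu hP
  · rw [← absorb_of_notMem (E := E) (hnotM u hu)]
    exact hT.exists_succ u hu hP

/-- Inside the attractor the owner of `P` plays towards `M`, so a play visiting `M` only finitely
often eventually stays outside the attractor. -/
theorem subset_winRegion_of_attractor (hwin : PrefixIndependent win) (hS : IsSubgame E S)
    (hM : M ⊆ S) (hMwin : ∀ p, IsPlay E S p → Buchi M p → win p)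
    (hY : S \ attractor E S P M ⊆ winRegion E (S \ attractor E S P M) P win) :
    S ⊆ winRegion E S P win := by
  classical
  set Y := S \ attractor E S P M
  have hYtrap : IsTrap E S P Y := isTrap_diff_attractor hS hM
  obtain ⟨gY, hgY, hgYR⟩ := exists_uniform_winning_strategy hwin (hYtrap.isSubgame hS) (P := P)
  obtain ⟨gA, hgA, hgAR⟩ :=
    exists_uniform_winning_strategy (prefixIndependent_buchi M) (hS.absorb M) (P := P)
  obtain ⟨gS, hgS⟩ := hS.exists_isStrategy
  refine fun v hv => ⟨Y.piecewise gY (M.piecewise gS gA), fun u hu => ?_, hv,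
    fun p hp hp0 hc => ?_⟩
  · by_cases huY : u ∈ Y
    · rw [piecewise_eq_of_mem _ _ _ huY]
      exact ⟨(hgY u huY).1, hYtrap.subset (hgY u huY).2⟩
    rw [piecewise_eq_of_notMem _ _ _ huY]
    by_cases huM : u ∈ M
    · rw [piecewise_eq_of_mem _ _ _ huM]
      exact hgS u hu
    · rw [piecewise_eq_of_notMem _ _ _ huM, ← absorb_of_notMem (E := E) huM]
      exact hgA u hu
  by_cases hinf : Buchi M p
  · exact hMwin p hp hinf
  obtain ⟨N, hN⟩ : ∃ N, ∀ n ≥ N, p n ∉ M := by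
    simpa [Buchi, ← Nat.frequently_atTop_iff_infinite] using hinf
  have hpY : ∀ n ≥ N, p n ∈ Y := by
    intro n hn
    by_contra hnY
    have hnA : p n ∈ attractor E S P M := by_contra fun h => hnY ⟨hp.1 n, h⟩
    have hq : IsPlay (absorb E M) (S \ M) fun j => p (j + n) :=
      ⟨fun j => ⟨hp.1 _, hN _ (by omega)⟩,
        fun j => by
          show p (j + 1 + n) ∈ absorb E M (p (j + n))
          rw [absorb_of_notMem (hN _ (by omega))]
          exact (hp.shift n).2 j⟩
    have hbuchi := win_of_agree (prefixIndependent_buchi M) hgA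
      (fun _ _ _ => inter_subset_right.trans sdiff_subset) (fun u hu _ => ?_) hq (hc.shift n)
      (k := 0) (by simpa using hgAR hnA)
    · exact hbuchi.nonempty.elim fun j hj => hN (j + n) (by omega) hj
    · rw [piecewise_eq_of_notMem _ _ _ fun h => h.2 (winSet_subset_winRegion hgA hu.1),
        piecewise_eq_of_notMem _ _ _ hu.2.2]
  exact (hwin p N).1 <| (hgYR (hY (hpY N le_rfl))).2 _
    ⟨fun j => hpY _ (by omega), (hp.shift N).2⟩ (by simp) fun j hP =>
    (hc.shift N j hP).trans (piecewise_eq_of_mem _ _ _ (hpY _ (by omega)))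

theorem subset_winRegion_union_of_min_color {χ : V → ℕ} {ε : ℕ → Prop} {Q : Set V}
    {win' : (ℕ → V) → Prop} (hS : IsSubgame E S) (hχ : (χ '' S).Finite)
    (hmin : ε (sInf (χ '' S))) (hwin' : PrefixIndependent win')
    (ih : ∀ Y ⊆ S, IsSubgame E Y → (χ '' Y).ncard < (χ '' S).ncard →
      Y ⊆ winRegion E Y Q (fun p => ε (payoff χ p)) ∪ winRegion E Y Qᶜ win') :
    S ⊆ winRegion E S Q (fun p => ε (payoff χ p)) ∪ winRegion E S Qᶜ win' := by
  intro v hv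
  set m := sInf (χ '' S)
  set W' := winRegion E S Qᶜ win'
  by_cases hvW' : v ∈ W'
  · exact .inr hvW'
  have hwin := prefixIndependent_payoff χ ε
  set X := S \ W'
  have hXtrap : IsTrap E S Qᶜ X := isTrap_diff_winRegion hwin' hS
  have hX : IsSubgame E X := hXtrap.isSubgame hS
  set M := {u ∈ X | χ u = m}
  have hMX : M ⊆ X := sep_subset _ _
  set Y := X \ attractor E X Q M
  have hYtrap : IsTrap E X Q Y := isTrap_diff_attractor hX hMX
  have hYS : Y ⊆ S := hYtrap.subset.trans sdiff_subset
  have hYcard : (χ '' Y).ncard < (χ '' S).ncard := by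
    refine ncard_lt_ncard ((ssubset_iff_of_subset (image_mono hYS)).2 ⟨m, ?_, ?_⟩) hχ
    · exact Nat.sInf_mem ⟨χ v, mem_image_of_mem χ hv⟩
    · rintro ⟨u, hu, hum⟩
      exact hu.2 (subset_attractor hX hMX ⟨hu.1, hum⟩)
  have hY : Y ⊆ winRegion E Y Q (fun p => ε (payoff χ p)) := by
    intro u hu
    refine (ih Y hYS (hYtrap.isSubgame hX) hYcard hu).resolve_right fun hu' => ?_
    exact (hYtrap.subset hu).2 (winRegion_subset_of_isTrap hwin' hS hYtrap hu')
  have hM : ∀ p, IsPlay E X p → Buchi M p → ε (payoff χ p) := by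
    intro p hp hMp
    rwa [payoff_eq_of_infinite (hMp.mono fun n hn => hn.2)
      fun n => Nat.sInf_le (mem_image_of_mem χ (hp.1 n).1)]
  refine .inl (winRegion_subset_winRegion hwin hS sdiff_subset ?_
    (subset_winRegion_of_attractor hwin hX hMX hM hY ⟨hv, hvW'⟩))
  exact fun u hu hQ => (hXtrap.succ_subset u hu hQ).trans subset_union_left

theorem subset_winRegion_union (V₀ : Set V) {χ : V → ℕ} (hS : IsSubgame E S)
    (hχ : (χ '' S).Finite) :
    S ⊆ winRegion E S V₀ (fun p => Even (payoff χ p)) ∪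
      winRegion E S V₀ᶜ (fun p => Odd (payoff χ p)) := by
  induction hn : (χ '' S).ncard using Nat.strong_induction_on generalizing S with
  | _ n ih =>
  have ih' : ∀ Y ⊆ S, IsSubgame E Y → (χ '' Y).ncard < (χ '' S).ncard →
      Y ⊆ winRegion E Y V₀ (fun p => Even (payoff χ p)) ∪
        winRegion E Y V₀ᶜ (fun p => Odd (payoff χ p)) :=
    fun Y hYS hY hlt => ih _ (hn ▸ hlt) hY (hχ.subset (image_mono hYS)) rfl
  rcases Nat.even_or_odd (sInf (χ '' S)) with hmin | hmin
  · exact subset_winRegion_union_of_min_color hS hχ hmin (prefixIndependent_payoff χ _) ih'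
  · have := subset_winRegion_union_of_min_color (Q := V₀ᶜ) hS hχ hmin
      (prefixIndependent_payoff χ _) fun Y hYS hY hlt => by
        rw [compl_compl, union_comm]
        exact ih' Y hYS hY hlt
    rwa [compl_compl, union_comm] at this

end ParityGame

open ParityGame

theorem parity_games_positional_determinacy {V : Type*}
    (V₀ : Set V) (E : V → Set V) (hE : ∀ v, (E v).Nonempty)
    (χ : V → ℕ) (hχ : (Set.range χ).Finite) :
    ∃ f₀ f₁ : V → V, (∀ v, f₀ v ∈ E v) ∧ (∀ v, f₁ v ∈ E v) ∧
      ∀ v : V,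
        (∀ p : ℕ → V, p 0 = v → (∀ n, p (n + 1) ∈ E (p n)) →
          (∀ n, p n ∈ V₀ → p (n + 1) = f₀ (p n)) →
          Even (sInf {c : ℕ | {n : ℕ | χ (p n) = c}.Infinite})) ∨
        (∀ p : ℕ → V, p 0 = v → (∀ n, p (n + 1) ∈ E (p n)) →
          (∀ n, p n ∉ V₀ → p (n + 1) = f₁ (p n)) →
          Odd (sInf {c : ℕ | {n : ℕ | χ (p n) = c}.Infinite})) := by
  have hS : IsSubgame E Set.univ := fun v _ => by simpa using hE v
  obtain ⟨f₀, hf₀, h₀⟩ :=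
    exists_uniform_winning_strategy (prefixIndependent_payoff χ Even) hS (P := V₀)
  obtain ⟨f₁, hf₁, h₁⟩ :=
    exists_uniform_winning_strategy (prefixIndependent_payoff χ Odd) hS (P := V₀ᶜ)
  refine ⟨f₀, f₁, fun v => (hf₀ v trivial).1, fun v => (hf₁ v trivial).1, fun v => ?_⟩
  rcases subset_winRegion_union V₀ hS (by rwa [image_univ]) (mem_univ v) with hv | hv
  · exact .inl fun p hp0 hp hc => (h₀ hv).2 p ⟨fun _ => trivial, hp⟩ hp0 hc
  · exact .inr fun p hp0 hp hc => (h₁ hv).2 p ⟨fun _ => trivial, hp⟩ hp0 hc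
end

section
/- Let (M, d) be a metric space and r a Setoid on M with quotient Q := Quotient r; let g and d∼ be the associated class-infimum function and quotient pseudometric. Then: (a) for all c, c' ∈ Q and all x, y ∈ M with ⟦x⟧ = c and ⟦y⟧ = c', one has 0 ≤ d∼ c c' ≤ g c c' ≤ d x y, and d∼ is a pseudometric on Q (d∼ c c = 0, d∼ is symmetric, and d∼ c c'' ≤ d∼ c c' + d∼ c' c''). (b) If for every class c there exists x₀ with ⟦x₀⟧ = c such that g c c' = sInf {d x₀ y | ⟦y⟧ = c'} for every class c', and moreover g c c' > 0 whenever c ≠ c', then d∼ = g and d∼ is a metric on Q (d∼ c c' = 0 ↔ c = c'). -/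
/-!
A chain sum splits as a first step plus a shorter chain, so facts about chain sums follow by
induction on chains: concatenation gives the triangle inequality for the chain infimum, and when
the weight itself satisfies the triangle inequality every chain sum dominates the weight of its
endpoints, so the chain infimum is the weight. In (b) that triangle inequality for `classInf`
comes from a representative `x₀` of the middle class realising both class infima from one point,
together with `dist z y ≤ dist x₀ z + dist x₀ y`.
-/

/-- The class-infimum function: infimum of distances between representatives. -/
noncomputable def classInf {M : Type*} [MetricSpace M] (r : Setoid M)
    (c c' : Quotient r) : ℝ :=
  sInf {t : ℝ | ∃ x y : M, Quotient.mk r x = c ∧ Quotient.mk r y = c' ∧ t = dist x y}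

/-- The quotient pseudometric: infimum over finite chains of class-infimum weights. -/
noncomputable def quotDist {M : Type*} [MetricSpace M] (r : Setoid M)
    (c c' : Quotient r) : ℝ :=
  sInf {t : ℝ | ∃ (n : ℕ) (f : Fin (n + 1) → Quotient r), f 0 = c ∧ f (Fin.last n) = c' ∧
    t = ∑ i : Fin n, classInf r (f i.castSucc) (f i.succ)}

section ChainSums

variable {α : Type*} (w : α → α → ℝ)

def chainSums (a b : α) : Set ℝ :=
  {t : ℝ | ∃ (n : ℕ) (f : Fin (n + 1) → α), f 0 = a ∧ f (Fin.last n) = b ∧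
    t = ∑ i : Fin n, w (f i.castSucc) (f i.succ)}

variable {w}

theorem zero_mem_chainSums (a : α) : 0 ∈ chainSums w a a :=
  ⟨0, fun _ => a, rfl, rfl, by simp⟩

theorem add_mem_chainSums_of_mem {a b c : α} {t : ℝ} (ht : t ∈ chainSums w b c) :
    w a b + t ∈ chainSums w a c := by
  obtain ⟨n, f, rfl, rfl, rfl⟩ := ht
  refine ⟨n + 1, Fin.cons a f, rfl, by simp [← Fin.succ_last], ?_⟩
  simp [Fin.sum_univ_succ]

theorem self_mem_chainSums (a b : α) : w a b ∈ chainSums w a b := by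
  simpa using add_mem_chainSums_of_mem (a := a) (zero_mem_chainSums (w := w) b)

theorem chainSums_induction {P : α → α → ℝ → Prop} (zero : ∀ a, P a a 0)
    (cons : ∀ a b c t, P b c t → P a c (w a b + t)) {a c : α} {t : ℝ}
    (ht : t ∈ chainSums w a c) : P a c t := by
  obtain ⟨n, f, rfl, rfl, rfl⟩ := ht
  induction n with
  | zero => simpa using zero (f 0)
  | succ n ih =>
    rw [Fin.sum_univ_succ]
    simpa only [Fin.tail, Fin.succ_last, Fin.succ_castSucc, Fin.castSucc_zero,
      Fin.succ_zero_eq_one] using cons (f 0) (f 1) _ _ (ih (Fin.tail f))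

theorem add_mem_chainSums {a b c : α} {s t : ℝ} (hs : s ∈ chainSums w a b)
    (ht : t ∈ chainSums w b c) : s + t ∈ chainSums w a c := by
  revert ht
  refine chainSums_induction (P := fun a b s => t ∈ chainSums w b c → s + t ∈ chainSums w a c)
    (fun _ ht => by simpa using ht)
    (fun _ _ _ _ ih ht => by simpa [add_assoc] using add_mem_chainSums_of_mem (ih ht)) hs

theorem mem_chainSums_comm (hw : ∀ a b, w a b = w b a) {a b : α} {t : ℝ}
    (ht : t ∈ chainSums w a b) : t ∈ chainSums w b a := by
  refine chainSums_induction (P := fun a b t => t ∈ chainSums w b a) zero_mem_chainSums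
    (fun a b _ _ ih => by
      simpa [add_comm, hw a b] using add_mem_chainSums ih (self_mem_chainSums b a)) ht

theorem nonneg_of_mem_chainSums (hw : ∀ a b, 0 ≤ w a b) {a b : α} {t : ℝ}
    (ht : t ∈ chainSums w a b) : 0 ≤ t := by
  refine chainSums_induction (P := fun _ _ t => 0 ≤ t) (fun _ => le_rfl)
    (fun a b _ _ ih => add_nonneg (hw a b) ih) ht

theorem le_of_mem_chainSums (hw_self : ∀ a, w a a = 0)
    (hw_triangle : ∀ a b c, w a c ≤ w a b + w b c) {a b : α} {t : ℝ}
    (ht : t ∈ chainSums w a b) : w a b ≤ t := by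
  refine chainSums_induction (P := fun a b t => w a b ≤ t) (fun a => (hw_self a).le)
    (fun a b c _ ih => (hw_triangle a b c).trans (by linarith)) ht

end ChainSums

section ChainInf

variable {α : Type*}

noncomputable def chainInf (w : α → α → ℝ) (a b : α) : ℝ :=
  sInf (chainSums w a b)

variable {w : α → α → ℝ}

theorem bddBelow_chainSums (hw : ∀ a b, 0 ≤ w a b) (a b : α) : BddBelow (chainSums w a b) :=
  ⟨0, fun _ => nonneg_of_mem_chainSums hw⟩

theorem chainInf_nonneg (hw : ∀ a b, 0 ≤ w a b) (a b : α) : 0 ≤ chainInf w a b :=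
  Real.sInf_nonneg fun _ => nonneg_of_mem_chainSums hw

theorem chainInf_le (hw : ∀ a b, 0 ≤ w a b) (a b : α) : chainInf w a b ≤ w a b :=
  csInf_le (bddBelow_chainSums hw a b) (self_mem_chainSums a b)

theorem chainInf_self (hw : ∀ a b, 0 ≤ w a b) (a : α) : chainInf w a a = 0 :=
  (csInf_le (bddBelow_chainSums hw a a) (zero_mem_chainSums a)).antisymm (chainInf_nonneg hw a a)

theorem chainInf_comm (hw : ∀ a b, w a b = w b a) (a b : α) : chainInf w a b = chainInf w b a :=
  congrArg sInf <| Set.ext fun _ => ⟨mem_chainSums_comm hw, mem_chainSums_comm hw⟩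

theorem chainInf_triangle (hw : ∀ a b, 0 ≤ w a b) (a b c : α) :
    chainInf w a c ≤ chainInf w a b + chainInf w b c := by
  have h₁ : ∀ s ∈ chainSums w a b, chainInf w a c - s ≤ chainInf w b c := fun s hs =>
    le_csInf ⟨_, self_mem_chainSums b c⟩ fun t ht => by
      have : chainInf w a c ≤ s + t :=
        csInf_le (bddBelow_chainSums hw a c) (add_mem_chainSums hs ht)
      linarith
  have h₂ : chainInf w a c - chainInf w b c ≤ chainInf w a b :=
    le_csInf ⟨_, self_mem_chainSums a b⟩ fun s hs => by linarith [h₁ s hs]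
  linarith

theorem chainInf_eq_self (hw_self : ∀ a, w a a = 0)
    (hw_triangle : ∀ a b c, w a c ≤ w a b + w b c) : chainInf w = w := by
  ext a b
  have hle : ∀ t ∈ chainSums w a b, w a b ≤ t := fun _ => le_of_mem_chainSums hw_self hw_triangle
  exact (csInf_le ⟨_, hle⟩ (self_mem_chainSums a b)).antisymm
    (le_csInf ⟨_, self_mem_chainSums a b⟩ hle)

end ChainInf

section ClassInf

variable {M : Type*} [MetricSpace M] (r : Setoid M)

theorem classInf_le_dist {c c' : Quotient r} {x y : M} (hx : Quotient.mk r x = c)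
    (hy : Quotient.mk r y = c') : classInf r c c' ≤ dist x y :=
  csInf_le ⟨0, by rintro _ ⟨_, _, -, -, rfl⟩; exact dist_nonneg⟩ ⟨x, y, hx, hy, rfl⟩

theorem classInf_nonneg (c c' : Quotient r) : 0 ≤ classInf r c c' :=
  Real.sInf_nonneg <| by rintro _ ⟨_, _, -, -, rfl⟩; exact dist_nonneg

theorem classInf_self (c : Quotient r) : classInf r c c = 0 := by
  obtain ⟨x, rfl⟩ := Quotient.exists_rep c
  exact ((classInf_le_dist r rfl rfl).trans_eq (dist_self x)).antisymm (classInf_nonneg r _ _)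

theorem classInf_comm (c c' : Quotient r) : classInf r c c' = classInf r c' c :=
  congrArg sInf <| Set.ext fun _ =>
    ⟨fun ⟨x, y, hx, hy, ht⟩ => ⟨y, x, hy, hx, ht.trans (dist_comm x y)⟩,
      fun ⟨x, y, hx, hy, ht⟩ => ⟨y, x, hy, hx, ht.trans (dist_comm x y)⟩⟩

theorem classInf_le_add_of_sInf_dist_le {x₀ : M}
    (hx₀ : ∀ c, sInf {t : ℝ | ∃ y : M, Quotient.mk r y = c ∧ t = dist x₀ y} ≤
      classInf r (Quotient.mk r x₀) c) (c c' : Quotient r) :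
    classInf r c c' ≤ classInf r (Quotient.mk r x₀) c + classInf r (Quotient.mk r x₀) c' := by
  set S := fun c => {t : ℝ | ∃ y : M, Quotient.mk r y = c ∧ t = dist x₀ y}
  have hS : ∀ c, (S c).Nonempty := fun c =>
    let ⟨y, hy⟩ := Quotient.exists_rep c; ⟨_, y, hy, rfl⟩
  have h₁ : ∀ y, Quotient.mk r y = c' → classInf r c c' - dist x₀ y ≤ sInf (S c) :=
    fun y hy => le_csInf (hS c) <| by
      rintro _ ⟨z, hz, rfl⟩
      linarith [classInf_le_dist r hz hy, dist_triangle_left z y x₀]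
  have h₂ : classInf r c c' - sInf (S c) ≤ sInf (S c') :=
    le_csInf (hS c') <| by rintro _ ⟨y, hy, rfl⟩; linarith [h₁ y hy]
  linarith [hx₀ c, hx₀ c']

end ClassInf

theorem quotient_pseudometric_properties {M : Type*} [MetricSpace M] (r : Setoid M) :
    ((∀ (c c' : Quotient r) (x y : M), Quotient.mk r x = c → Quotient.mk r y = c' →
        0 ≤ quotDist r c c' ∧ quotDist r c c' ≤ classInf r c c' ∧
          classInf r c c' ≤ dist x y) ∧
      (∀ c : Quotient r, quotDist r c c = 0) ∧
      (∀ c c' : Quotient r, quotDist r c c' = quotDist r c' c) ∧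
      (∀ c c' c'' : Quotient r, quotDist r c c'' ≤ quotDist r c c' + quotDist r c' c'')) ∧
    ((∀ c : Quotient r, ∃ x₀ : M, Quotient.mk r x₀ = c ∧
        ∀ c' : Quotient r,
          classInf r c c' = sInf {t : ℝ | ∃ y : M, Quotient.mk r y = c' ∧ t = dist x₀ y}) →
      (∀ c c' : Quotient r, c ≠ c' → 0 < classInf r c c') →
      (quotDist r = classInf r ∧ ∀ c c' : Quotient r, quotDist r c c' = 0 ↔ c = c')) := by
  have hq : quotDist r = chainInf (classInf r) := rfl
  have hw := classInf_nonneg r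
  rw [hq]
  refine ⟨⟨fun c c' x y hx hy => ⟨chainInf_nonneg hw c c', chainInf_le hw c c',
    classInf_le_dist r hx hy⟩, chainInf_self hw, chainInf_comm (classInf_comm r),
    chainInf_triangle hw⟩, fun H hpos => ?_⟩
  have htriangle : ∀ a b c, classInf r a c ≤ classInf r a b + classInf r b c := by
    intro a b c
    obtain ⟨x₀, rfl, hx₀⟩ := H b
    rw [classInf_comm r a (Quotient.mk r x₀)]
    exact classInf_le_add_of_sInf_dist_le r (fun c => (hx₀ c).ge) a c
  rw [chainInf_eq_self (classInf_self r) htriangle]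
  exact ⟨rfl, fun c c' => ⟨fun h => by_contra fun hne => (hpos c c' hne).ne' h,
    fun h => h ▸ classInf_self r c⟩⟩
end

section
/- Let C be a nonempty set of tree substitutions that is a chain with respect to the pointwise order, and let σ' be the pointwise union, σ' x := ⋃_{σ ∈ C} σ x (which is again a tree substitution). Then for every input tree s (a finite ranked tree over Σ ⊕ X), σ'_io(s) = ⋃_{σ ∈ C} σ_io(s). -/
/-- Arity function for pattern trees: `Sum.inl a` has rank `rkA a`, holes have rank 0. -/
def patArity {A : Type*} (rkA : A → ℕ) (h : ℕ) : A ⊕ Fin h → Type :=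
  fun d => Fin (Sum.elim rkA (fun _ => 0) d)

/-- Arity function for input trees: `Sum.inl a` has rank `rkA a`, `Sum.inr x` has rank `rkX x`. -/
def inArity {A X : Type*} (rkA : A → ℕ) (rkX : X → ℕ) : A ⊕ X → Type :=
  fun d => Fin (Sum.elim rkA rkX d)

/-- `plug t g` replaces every leaf of `t` labeled by the hole `i` with `g i`. -/
def plug {A : Type*} {rkA : A → ℕ} {h : ℕ} :
    WType (patArity rkA h) → (Fin h → WType (patArity rkA h)) → WType (patArity rkA h)
  | WType.mk (Sum.inl a) c, g => WType.mk (Sum.inl a) (fun j => plug (c j) g)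
  | WType.mk (Sum.inr i) _, g => g i

/-- The set of holes occurring in a pattern tree. -/
def holes {A : Type*} {rkA : A → ℕ} {h : ℕ} : WType (patArity rkA h) → Set (Fin h)
  | WType.mk (Sum.inl _) c => ⋃ j, holes (c j)
  | WType.mk (Sum.inr i) _ => {i}

/-- `σ` is a tree substitution: each tree of `σ x` only uses holes `i` with `i < rkX x`. -/
def IsTreeSubst {A X : Type*} (rkA : A → ℕ) (rkX : X → ℕ) (h : ℕ)
    (σ : X → Set (WType (patArity rkA h))) : Prop :=
  ∀ x : X, ∀ t ∈ σ x, ∀ i ∈ holes t, (i : ℕ) < rkX x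

/-- The inside-out extension of a tree substitution to input trees. -/
def subIO {A X : Type*} (rkA : A → ℕ) (rkX : X → ℕ) (h : ℕ)
    (σ : X → Set (WType (patArity rkA h))) :
    WType (inArity rkA rkX) → Set (WType (patArity rkA h))
  | WType.mk (Sum.inl a) c =>
      {t | ∃ c' : Fin (rkA a) → WType (patArity rkA h),
        (∀ j : Fin (rkA a), c' j ∈ subIO rkA rkX h σ (c j)) ∧
        t = WType.mk (Sum.inl a) (fun j => c' j)}
  | WType.mk (Sum.inr x) c =>
      {t' | ∃ t ∈ σ x, ∃ g : Fin h → WType (patArity rkA h),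
        (∀ (i : Fin h) (hi : (i : ℕ) < rkX x), g i ∈ subIO rkA rkX h σ (c ⟨(i : ℕ), hi⟩)) ∧
        t' = plug t g}

/-- `plugRel S t t'` holds iff `t'` is obtained from `t` by replacing each leaf labeled by
hole `i`, independently of all other leaves, by some element of `S i`. -/
def plugRel {A : Type*} {rkA : A → ℕ} {h : ℕ} (S : Fin h → Set (WType (patArity rkA h))) :
    WType (patArity rkA h) → WType (patArity rkA h) → Prop
  | WType.mk (Sum.inl a) c, t' =>
      ∃ c' : Fin (rkA a) → WType (patArity rkA h),
        (∀ j : Fin (rkA a), plugRel S (c j) (c' j)) ∧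
        t' = WType.mk (Sum.inl a) (fun j => c' j)
  | WType.mk (Sum.inr i) _, t' => t' ∈ S i

/-- The outside-in extension of a tree substitution to input trees. -/
def subOI {A X : Type*} (rkA : A → ℕ) (rkX : X → ℕ) (h : ℕ)
    (σ : X → Set (WType (patArity rkA h))) :
    WType (inArity rkA rkX) → Set (WType (patArity rkA h))
  | WType.mk (Sum.inl a) c =>
      {t | ∃ c' : Fin (rkA a) → WType (patArity rkA h),
        (∀ j : Fin (rkA a), c' j ∈ subOI rkA rkX h σ (c j)) ∧
        t = WType.mk (Sum.inl a) (fun j => c' j)}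
  | WType.mk (Sum.inr x) c =>
      {t' | ∃ t ∈ σ x, plugRel
        (fun i : Fin h =>
          if hi : (i : ℕ) < rkX x then subOI rkA rkX h σ (c ⟨(i : ℕ), hi⟩) else ∅) t t'}

/-! The inside-out extension is monotone in the substitution and only ever inspects finitely many
of its values, so over a nonempty directed family every element of the union's extension is
already produced by a single member of the family: one that dominates the finitely many members
used at the root and at its children. -/

theorem DirectedOn.exists_mem_forall_of_finite {α ι : Type*} [Preorder α] [Finite ι]
    {C : Set α} (hd : DirectedOn (· ≤ ·) C) (hne : C.Nonempty) {P : ι → α → Prop}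
    (hP : ∀ i ⦃σ τ⦄, σ ≤ τ → P i σ → P i τ) (h : ∀ i, ∃ σ ∈ C, P i σ) : ∃ σ ∈ C, ∀ i, P i σ := by
  choose f hfC hf using h
  have := hne.to_subtype
  obtain ⟨m, hm⟩ := hd.directed_val.finite_le fun i => (⟨f i, hfC i⟩ : C)
  exact ⟨m, m.2, fun i => hP i (hm i) (hf i)⟩

section

variable {A X : Type*} {rkA : A → ℕ} {rkX : X → ℕ} {h : ℕ}

theorem subIO_mono {σ τ : X → Set (WType (patArity rkA h))} (hστ : σ ≤ τ) :
    ∀ s, subIO rkA rkX h σ s ⊆ subIO rkA rkX h τ s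
  | WType.mk (Sum.inl _) c, _, ⟨c', hc', ht⟩ =>
      ⟨c', fun j => subIO_mono hστ (c j) (hc' j), ht⟩
  | WType.mk (Sum.inr x) c, _, ⟨t, ht, g, hg, ht'⟩ =>
      ⟨t, hστ x ht, g, fun i hi => subIO_mono hστ (c _) (hg i hi), ht'⟩

theorem isTreeSubst_biUnion {C : Set (X → Set (WType (patArity rkA h)))}
    (hC : ∀ σ ∈ C, IsTreeSubst rkA rkX h σ) :
    IsTreeSubst rkA rkX h fun x => ⋃ σ ∈ C, σ x := by
  intro x t ht
  obtain ⟨σ, hσC, htσ⟩ := Set.mem_iUnion₂.mp ht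
  exact hC σ hσC x t htσ

theorem exists_mem_subIO_of_mem_subIO_biUnion {C : Set (X → Set (WType (patArity rkA h)))}
    (hd : DirectedOn (· ≤ ·) C) (hne : C.Nonempty) :
    ∀ s, ∀ t ∈ subIO rkA rkX h (fun x => ⋃ σ ∈ C, σ x) s, ∃ σ ∈ C, t ∈ subIO rkA rkX h σ s
  | WType.mk (Sum.inl a) c, _, ⟨c', hc', ht⟩ => by
      obtain ⟨σ, hσC, hσ⟩ := hd.exists_mem_forall_of_finite (ι := Fin (rkA a)) hne
        (P := fun j σ => c' j ∈ subIO rkA rkX h σ (c j))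
        (fun j _ _ hστ hσ => subIO_mono hστ _ hσ)
        (fun j => exists_mem_subIO_of_mem_subIO_biUnion hd hne (c j) _ (hc' j))
      exact ⟨σ, hσC, c', hσ, ht⟩
  | WType.mk (Sum.inr x) c, _, ⟨t, ht, g, hg, ht'⟩ => by
      obtain ⟨σ₀, hσ₀C, htσ₀⟩ := Set.mem_iUnion₂.mp ht
      have hchildren : ∀ i : Fin h, ∃ σ ∈ C,
          ∀ hi : (i : ℕ) < rkX x, g i ∈ subIO rkA rkX h σ (c ⟨i, hi⟩) := by
        intro i
        by_cases hi : (i : ℕ) < rkX x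
        · obtain ⟨σ, hσC, hσ⟩ := exists_mem_subIO_of_mem_subIO_biUnion hd hne _ _ (hg i hi)
          exact ⟨σ, hσC, fun _ => hσ⟩
        · exact ⟨hne.some, hne.some_mem, fun hi' => absurd hi' hi⟩
      obtain ⟨σ₁, hσ₁C, hσ₁⟩ := hd.exists_mem_forall_of_finite hne
        (fun i _ _ hστ hg hi => subIO_mono hστ _ (hg hi)) hchildren
      obtain ⟨σ, hσC, hσ₀σ, hσ₁σ⟩ := hd σ₀ hσ₀C σ₁ hσ₁C
      exact ⟨σ, hσC, t, hσ₀σ x htσ₀, g, fun i hi => subIO_mono hσ₁σ _ (hσ₁ i hi), ht'⟩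

theorem subIO_biUnion {C : Set (X → Set (WType (patArity rkA h)))}
    (hd : DirectedOn (· ≤ ·) C) (hne : C.Nonempty) (s : WType (inArity rkA rkX)) :
    subIO rkA rkX h (fun x => ⋃ σ ∈ C, σ x) s = ⋃ σ ∈ C, subIO rkA rkX h σ s := by
  apply Set.Subset.antisymm
  · intro t ht
    obtain ⟨σ, hσC, htσ⟩ := exists_mem_subIO_of_mem_subIO_biUnion hd hne s t ht
    exact Set.mem_biUnion hσC htσ
  · exact Set.iUnion₂_subset fun σ hσC =>
      subIO_mono (fun x => Set.subset_biUnion_of_mem (u := fun σ => σ x) hσC) s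

end

theorem io_of_chain_union_general {A X : Type*} (rkA : A → ℕ) (rkX : X → ℕ) (h : ℕ)
    (C : Set (X → Set (WType (patArity rkA h)))) (hne : C.Nonempty)
    (hchain : IsChain (· ≤ ·) C) (hC : ∀ σ ∈ C, IsTreeSubst rkA rkX h σ)
    (σ' : X → Set (WType (patArity rkA h))) (hσ' : ∀ x : X, σ' x = ⋃ σ ∈ C, σ x) :
    IsTreeSubst rkA rkX h σ' ∧
    ∀ s : WType (inArity rkA rkX),
      subIO rkA rkX h σ' s = ⋃ σ ∈ C, subIO rkA rkX h σ s := by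
  obtain rfl : σ' = fun x => ⋃ σ ∈ C, σ x := funext hσ'
  exact ⟨isTreeSubst_biUnion hC, subIO_biUnion hchain.directedOn hne⟩

theorem io_of_chain_union {A X : Type*} (rkA : A → ℕ) (rkX : X → ℕ) (h : ℕ)
    (hA : ∀ a, rkA a ≤ h) (hX : ∀ x, rkX x ≤ h)
    (C : Set (X → Set (WType (patArity rkA h)))) (hne : C.Nonempty)
    (hchain : IsChain (· ≤ ·) C) (hC : ∀ σ ∈ C, IsTreeSubst rkA rkX h σ)
    (σ' : X → Set (WType (patArity rkA h))) (hσ' : ∀ x : X, σ' x = ⋃ σ ∈ C, σ x) :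
    IsTreeSubst rkA rkX h σ' ∧
    ∀ s : WType (inArity rkA rkX),
      subIO rkA rkX h σ' s = ⋃ σ ∈ C, subIO rkA rkX h σ s :=
  io_of_chain_union_general rkA rkX h C hne hchain hC σ' hσ'
end

section
/- Let L be a set of input trees (finite ranked trees over Σ ⊕ X) and R a set of pattern trees, and write σ_oi(L) := ⋃_{s ∈ L} σ_oi(s). If σ is a tree substitution with σ_oi(L) ⊆ R, then there exists a tree substitution σ' with σ ≤ σ' and σ'_oi(L) ⊆ R that is maximal: every tree substitution τ with σ' ≤ τ and τ_oi(L) ⊆ R equals σ'. The same statement holds with σ_oi(L) = R in place of σ_oi(L) ⊆ R. -/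
section Aux

variable {A X : Type*} {rkA : A → ℕ} {rkX : X → ℕ} {h : ℕ}

lemma plugRel_mono {S T : Fin h → Set (WType (patArity rkA h))}
    (hST : ∀ i, S i ⊆ T i) :
    ∀ t t', plugRel S t t' → plugRel T t t' := by
  intro t
  induction t with
  | mk d c ih =>
    cases d with
    | inl a =>
      intro t' ht'
      simp only [plugRel] at ht' ⊢
      obtain ⟨c', hc', rfl⟩ := ht'
      exact ⟨c', fun j => ih j _ (hc' j), rfl⟩
    | inr i =>
      intro t' ht'
      exact hST i ht'

lemma subOI_mono {σ τ : X → Set (WType (patArity rkA h))} (hστ : ∀ x, σ x ⊆ τ x) :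
    ∀ s, subOI rkA rkX h σ s ⊆ subOI rkA rkX h τ s := by
  intro s
  induction s with
  | mk d c ih =>
    cases d with
    | inl a =>
      intro t ht
      simp only [subOI] at ht ⊢
      obtain ⟨c', hc', rfl⟩ := ht
      exact ⟨c', fun j => ih j (hc' j), rfl⟩
    | inr x =>
      intro t' ht'
      simp only [subOI] at ht' ⊢
      obtain ⟨t, htx, hp⟩ := ht'
      refine ⟨t, hστ x htx, plugRel_mono ?_ t t' hp⟩
      intro i
      by_cases hi : (i : ℕ) < rkX x
      · simp only [dif_pos hi]; exact ih _
      · simp [dif_neg hi]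

lemma plugRel_directed {ι : Type*} [Nonempty ι]
    {S : Fin h → Set (WType (patArity rkA h))}
    {T : ι → Fin h → Set (WType (patArity rkA h))}
    (hdir : Directed (· ≤ ·) T)
    (hsub : ∀ j, S j ⊆ ⋃ i, T i j) :
    ∀ t t', plugRel S t t' → ∃ i, plugRel (T i) t t' := by
  classical
  intro t
  induction t with
  | mk d c ih =>
    cases d with
    | inl a =>
      intro t' ht'
      simp only [plugRel] at ht'
      obtain ⟨c', hc', rfl⟩ := ht'
      choose f hf using fun j => ih j _ (hc' j)
      haveI : Fintype (patArity rkA h (Sum.inl a)) := inferInstanceAs (Fintype (Fin (rkA a)))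
      obtain ⟨i, hi⟩ := hdir.finset_le (Finset.univ.image f)
      refine ⟨i, ?_⟩
      simp only [plugRel]
      exact ⟨c', fun j =>
        plugRel_mono (fun k => hi (f j) (Finset.mem_image_of_mem f (@Finset.mem_univ _ this j)) k)
          _ _ (hf j), rfl⟩
    | inr i =>
      intro t' ht'
      exact Set.mem_iUnion.mp (hsub i ht')

lemma subOI_directed {ι : Type*} [Nonempty ι]
    {F : ι → X → Set (WType (patArity rkA h))}
    (hdir : Directed (· ≤ ·) F) :
    ∀ s, subOI rkA rkX h (fun x => ⋃ i, F i x) s ⊆ ⋃ i, subOI rkA rkX h (F i) s := by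
  classical
  intro s
  induction s with
  | mk d c ih =>
    cases d with
    | inl a =>
      intro t ht
      simp only [subOI] at ht
      obtain ⟨c', hc', rfl⟩ := ht
      choose f hf using fun j => Set.mem_iUnion.mp (ih j (hc' j))
      haveI : Fintype (inArity rkA rkX (Sum.inl a)) := inferInstanceAs (Fintype (Fin (rkA a)))
      obtain ⟨i, hi⟩ := hdir.finset_le (Finset.univ.image f)
      refine Set.mem_iUnion.mpr ⟨i, ?_⟩
      simp only [subOI]
      exact ⟨c', fun j =>
        subOI_mono (fun x => hi (f j) (Finset.mem_image_of_mem f (@Finset.mem_univ _ this j)) x)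
          _ (hf j), rfl⟩
    | inr x =>
      intro t' ht'
      simp only [subOI] at ht'
      obtain ⟨t, htx, hp⟩ := ht'
      obtain ⟨i0, hti0⟩ := Set.mem_iUnion.mp htx
      have hdirT : Directed (· ≤ ·)
          (fun i (j : Fin h) =>
            if hj : (j : ℕ) < rkX x then subOI rkA rkX h (F i) (c ⟨(j : ℕ), hj⟩) else ∅) := by
        intro i1 i2
        obtain ⟨i, h1, h2⟩ := hdir i1 i2
        refine ⟨i, ?_, ?_⟩ <;> intro j <;> by_cases hj : (j : ℕ) < rkX x
        · simp only [dif_pos hj]; exact subOI_mono (fun y => h1 y) _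
        · simp only [dif_neg hj]; exact Set.empty_subset _
        · simp only [dif_pos hj]; exact subOI_mono (fun y => h2 y) _
        · simp only [dif_neg hj]; exact Set.empty_subset _
      have hsub : ∀ j : Fin h,
          (if hj : (j : ℕ) < rkX x then
              subOI rkA rkX h (fun x => ⋃ i, F i x) (c ⟨(j : ℕ), hj⟩) else ∅) ⊆
          ⋃ i, if hj : (j : ℕ) < rkX x then subOI rkA rkX h (F i) (c ⟨(j : ℕ), hj⟩) else ∅ := by
        intro j
        by_cases hj : (j : ℕ) < rkX x
        · simp only [dif_pos hj]
          exact ih _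
        · simp [dif_neg hj]
      obtain ⟨i1, hp1⟩ := plugRel_directed hdirT hsub t t' hp
      obtain ⟨i, hF0, hF1⟩ := hdir i0 i1
      refine Set.mem_iUnion.mpr ⟨i, ?_⟩
      simp only [subOI]
      refine ⟨t, hF0 x hti0, plugRel_mono ?_ t t' hp1⟩
      intro j
      by_cases hj : (j : ℕ) < rkX x
      · simp only [dif_pos hj]
        exact subOI_mono (fun y => hF1 y) _
      · simp [dif_neg hj]

end Aux

theorem exists_maximal_oi_solution {A X : Type*} (rkA : A → ℕ) (rkX : X → ℕ) (h : ℕ)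
    (hA : ∀ a, rkA a ≤ h) (hX : ∀ x, rkX x ≤ h)
    (L : Set (WType (inArity rkA rkX))) (R : Set (WType (patArity rkA h)))
    (σ : X → Set (WType (patArity rkA h))) (hσ : IsTreeSubst rkA rkX h σ) :
    ((⋃ s ∈ L, subOI rkA rkX h σ s) ⊆ R →
      ∃ σ' : X → Set (WType (patArity rkA h)), IsTreeSubst rkA rkX h σ' ∧ σ ≤ σ' ∧
        (⋃ s ∈ L, subOI rkA rkX h σ' s) ⊆ R ∧
        ∀ τ : X → Set (WType (patArity rkA h)), IsTreeSubst rkA rkX h τ → σ' ≤ τ →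
          (⋃ s ∈ L, subOI rkA rkX h τ s) ⊆ R → τ = σ') ∧
    ((⋃ s ∈ L, subOI rkA rkX h σ s) = R →
      ∃ σ' : X → Set (WType (patArity rkA h)), IsTreeSubst rkA rkX h σ' ∧ σ ≤ σ' ∧
        (⋃ s ∈ L, subOI rkA rkX h σ' s) = R ∧
        ∀ τ : X → Set (WType (patArity rkA h)), IsTreeSubst rkA rkX h τ → σ' ≤ τ →
          (⋃ s ∈ L, subOI rkA rkX h τ s) = R → τ = σ') := by
  classical
  set s : Set (X → Set (WType (patArity rkA h))) :=
    {σ' | IsTreeSubst rkA rkX h σ' ∧ (⋃ s ∈ L, subOI rkA rkX h σ' s) ⊆ R} with hs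
  have key : (⋃ s ∈ L, subOI rkA rkX h σ s) ⊆ R →
      ∃ m, σ ≤ m ∧ Maximal (· ∈ s) m := by
    intro hsub
    refine zorn_le_nonempty₀ s ?_ σ ⟨hσ, hsub⟩
    intro c hcs hchain y hy
    haveI : Nonempty ↥c := ⟨⟨y, hy⟩⟩
    have hdir : Directed (· ≤ ·) (fun i : ↥c => (i : X → Set (WType (patArity rkA h)))) :=
      directedOn_iff_directed.mp hchain.directedOn
    refine ⟨fun x => ⋃ i : ↥c, (i : X → Set (WType (patArity rkA h))) x, ⟨?_, ?_⟩, ?_⟩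
    · intro x t ht i hi
      obtain ⟨σ', hσ'⟩ := Set.mem_iUnion.mp ht
      exact (hcs σ'.2).1 x t hσ' i hi
    · intro u hu
      obtain ⟨w, hwL, hw⟩ := Set.mem_iUnion₂.mp hu
      obtain ⟨i, hi⟩ := Set.mem_iUnion.mp (subOI_directed hdir w hw)
      exact (hcs i.2).2 (Set.mem_biUnion hwL hi)
    · intro z hz x
      exact Set.subset_iUnion
        (fun i : ↥c => (i : X → Set (WType (patArity rkA h))) x) ⟨z, hz⟩
  constructor
  · intro hsub
    obtain ⟨m, hσm, ⟨hTS, hR⟩, hmax⟩ := key hsub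
    exact ⟨m, hTS, hσm, hR,
      fun τ hτ hmτ hτR => le_antisymm (hmax ⟨hτ, hτR⟩ hmτ) hmτ⟩
  · intro heq
    obtain ⟨m, hσm, ⟨hTS, hR⟩, hmax⟩ := key heq.le
    refine ⟨m, hTS, hσm, ?_, ?_⟩
    · refine le_antisymm hR ?_
      rw [← heq]
      exact Set.iUnion₂_mono fun w _ => subOI_mono (fun x => hσm x) w
    · intro τ hτ hmτ hτR
      exact le_antisymm (hmax ⟨hτ, hτR.le⟩ hmτ) hmτ
end

section
/- Write a := false and b := true in Bool, and let R := {u : ℕ → Bool | ∃ k ≥ 1, b^k is not a factor of u}. Call S : Set (List Bool) a solution if every w ∈ S is nonempty and ι f ∈ R for every f : ℕ → List Bool with f n ∈ S for all n. Then the singleton {[a]} is a solution, but there is no maximal solution: for every solution S there exists a solution S' with S ⊂ S' (strict inclusion). -/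
/-- `b^k` is a factor of the ω-word `u` (with `b := true`). -/
def PowBFactor (u : ℕ → Bool) (k : ℕ) : Prop :=
  ∃ n : ℕ, ∀ j < k, u (n + j) = true

/-- The ω-language of words avoiding `b^k` as a factor for some `k ≥ 1`. -/
def Rset : Set (ℕ → Bool) :=
  {u | ∃ k ≥ 1, ¬ PowBFactor u k}

/-- Auxiliary function computing the letter at index `n` of the concatenation
`[a] ++ f k ++ [a] ++ f (k+1) ++ ⋯` (with `a := false`). -/
def iotaAux (f : ℕ → List Bool) (k n : ℕ) : Bool :=
  if hn : n < (false :: f k).length then (false :: f k).get ⟨n, hn⟩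
  else iotaAux f (k + 1) (n - (false :: f k).length)
termination_by n
decreasing_by
  simp only [List.length_cons, not_lt] at hn
  simp only [List.length_cons]
  omega

/-- The ω-word `[a] ++ f 0 ++ [a] ++ f 1 ++ [a] ++ f 2 ++ ⋯` (with `a := false`). -/
def iota (f : ℕ → List Bool) : ℕ → Bool :=
  iotaAux f 0

/-- `S` is a solution: all its words are nonempty and every ω-word
`[a] ++ f 0 ++ [a] ++ f 1 ++ ⋯` with all `f n ∈ S` belongs to `Rset`. -/
def IsSolution (S : Set (List Bool)) : Prop :=
  (∀ w ∈ S, w ≠ []) ∧ ∀ f : ℕ → List Bool, (∀ n, f n ∈ S) → iota f ∈ Rset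

/-!
A run of `b`s in `ι f` cannot cross one of the separating letters `a`, so `b^k` is a factor of
`ι f` iff it is a factor of some block `f m`. Hence `S` is a solution iff its words are nonempty
and, for some `K`, none of them contains `b^K`: a bound on the `b`-runs must be uniform over `S`,
since otherwise blocks with ever longer runs would give an `ι f` containing every `b^k`.
Such an `S` does not contain `b^(K+1)`, and `S ∪ {b^(K+1)}` is again a solution, with bound `K + 2`.
-/

namespace List

variable {α : Type*} {a : α} {m n : ℕ} {l : List α}

theorem replicate_infix_iff_getElem? :
    replicate n a <:+: l ↔ ∃ s, s + n ≤ l.length ∧ ∀ i < n, l[s + i]? = some a := by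
  simp only [infix_iff_getElem?, length_replicate, getElem_replicate]
  exact exists_congr fun s => and_congr (by omega) (by simp [Nat.add_comm])

theorem replicate_infix_replicate (h : m ≤ n) : replicate m a <:+: replicate n a := by
  simp [infix_replicate_iff, h]

end List

section Blocks

variable (f : ℕ → List Bool)

def blockStart (k : ℕ) : ℕ :=
  ∑ i ∈ Finset.range k, ((f i).length + 1)

theorem blockStart_succ (k : ℕ) : blockStart f (k + 1) = blockStart f k + ((f k).length + 1) :=
  Finset.sum_range_succ _ _

theorem iota_blockStart_add (k m : ℕ) : iota f (blockStart f k + m) = iotaAux f k m := by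
  induction k generalizing m with
  | zero => simp [iota, blockStart]
  | succ k ih =>
    rw [blockStart_succ, add_assoc, ih, iotaAux, dif_neg (by simp only [List.length_cons]; omega)]
    simp

theorem iota_blockStart_add_of_lt {k m : ℕ} (hm : m < (f k).length + 1) :
    iota f (blockStart f k + m) = (false :: f k)[m] := by
  rw [iota_blockStart_add, iotaAux, dif_pos]
  rfl

theorem iota_blockStart (k : ℕ) : iota f (blockStart f k) = false := by
  simpa using iota_blockStart_add_of_lt f (k := k) (m := 0) (by omega)

theorem iota_blockStart_add_succ {k j : ℕ} (hj : j < (f k).length) :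
    iota f (blockStart f k + (j + 1)) = (f k)[j] := by
  rw [iota_blockStart_add_of_lt f (by omega), List.getElem_cons_succ]

theorem exists_eq_blockStart_add (n : ℕ) : ∃ k r, r ≤ (f k).length ∧ n = blockStart f k + r := by
  induction n with
  | zero => exact ⟨0, 0, Nat.zero_le _, by simp [blockStart]⟩
  | succ n ih =>
    obtain ⟨k, r, hr, rfl⟩ := ih
    rcases hr.lt_or_eq with hr | rfl
    · exact ⟨k, r + 1, hr, rfl⟩
    · exact ⟨k + 1, 0, Nat.zero_le _, by rw [blockStart_succ]; omega⟩

theorem exists_replicate_infix_of_powBFactor_iota {k : ℕ} (h : PowBFactor (iota f) k) :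
    ∃ m, List.replicate k true <:+: f m := by
  obtain ⟨n, hn⟩ := h
  rcases k.eq_zero_or_pos with rfl | hk
  · exact ⟨0, by simp⟩
  obtain ⟨m, r, hr, rfl⟩ := exists_eq_blockStart_add f n
  obtain ⟨s, rfl⟩ : ∃ s, r = s + 1 := by
    have h0 := hn 0 hk
    cases r with
    | zero => simp [iota_blockStart] at h0
    | succ s => exact ⟨s, rfl⟩
  -- the run would otherwise reach the separator `a` at `blockStart f (m + 1)`
  have hfit : s + k ≤ (f m).length := by
    by_contra! h
    have hsep := hn ((f m).length - s) (by omega)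
    rw [show blockStart f m + (s + 1) + ((f m).length - s) = blockStart f (m + 1) by
      rw [blockStart_succ]; omega, iota_blockStart] at hsep
    exact Bool.false_ne_true hsep
  refine ⟨m, List.replicate_infix_iff_getElem?.2 ⟨s, hfit, fun i hi => ?_⟩⟩
  have hrun := hn i hi
  rw [show blockStart f m + (s + 1) + i = blockStart f m + (s + i + 1) by omega,
    iota_blockStart_add_succ f (by omega)] at hrun
  rw [List.getElem?_eq_getElem (by omega), hrun]

theorem powBFactor_iota_of_replicate_infix {k m : ℕ} (h : List.replicate k true <:+: f m) :
    PowBFactor (iota f) k := by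
  obtain ⟨s, hfit, hs⟩ := List.replicate_infix_iff_getElem?.1 h
  refine ⟨blockStart f m + (s + 1), fun i hi => ?_⟩
  have hletter := hs i hi
  rw [List.getElem?_eq_getElem (by omega), Option.some_inj] at hletter
  rw [show blockStart f m + (s + 1) + i = blockStart f m + (s + i + 1) by omega,
    iota_blockStart_add_succ f (by omega), hletter]

theorem powBFactor_iota_iff {k : ℕ} :
    PowBFactor (iota f) k ↔ ∃ m, List.replicate k true <:+: f m :=
  ⟨exists_replicate_infix_of_powBFactor_iota f,
    fun ⟨_, h⟩ => powBFactor_iota_of_replicate_infix f h⟩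

end Blocks

theorem isSolution_iff {S : Set (List Bool)} :
    IsSolution S ↔ (∀ w ∈ S, w ≠ []) ∧ ∃ K, ∀ w ∈ S, ¬ List.replicate K true <:+: w := by
  refine ⟨fun hS => ⟨hS.1, ?_⟩, fun ⟨hne, K, hK⟩ => ⟨hne, fun f hf => ?_⟩⟩
  · by_contra! h
    choose g hgS hg using h
    obtain ⟨k, -, hk⟩ := hS.2 g hgS
    exact hk ((powBFactor_iota_iff g).2 ⟨k, hg k⟩)
  · refine ⟨K + 1, by omega, fun hfac => ?_⟩
    obtain ⟨m, hm⟩ := (powBFactor_iota_iff f).1 hfac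
    exact hK (f m) (hf m) ((List.replicate_infix_replicate K.le_succ).trans hm)

theorem no_maximal_solution :
    IsSolution {[false]} ∧
    ∀ S : Set (List Bool), IsSolution S → ∃ S' : Set (List Bool), IsSolution S' ∧ S ⊂ S' := by
  refine ⟨isSolution_iff.2 ⟨by simp, 1, by simp [List.singleton_infix_iff]⟩, fun S hS => ?_⟩
  obtain ⟨hne, K, hK⟩ := isSolution_iff.1 hS
  have hnew : List.replicate (K + 1) true ∉ S := fun h =>
    hK _ h (List.replicate_infix_replicate K.le_succ)
  refine ⟨insert (List.replicate (K + 1) true) S, isSolution_iff.2 ⟨?_, K + 2, ?_⟩,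
    Set.ssubset_insert hnew⟩
  · rintro w (rfl | hw)
    · simp
    · exact hne w hw
  · rintro w (rfl | hw) hinf
    · simpa using hinf.length_le
    · exact hK w hw ((List.replicate_infix_replicate (by omega)).trans hinf)
end
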